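/- arXiv:math/9906112 — 4 statements merged into one kernel-verified Lean document; each statement's English description precedes it below -/
import Mathlib

section
/- For every integer N ≥ 2, the sum ν_N := Σ_{k=1}^{N−1} 1/|e^{2πik/N} − 1|² equals (N² − 1)/12. -/
open Complex Finset

lemma sum_id_real (n : ℕ) : ∑ j ∈ range n, (j:ℝ) = (n:ℝ) * ((n:ℝ) - 1) / 2 := by
  induction n with
  | zero => simp
  | succ n ih => rw [Finset.sum_range_succ, ih]; push_cast; ring

lemma sum_sq_real (n : ℕ) : ∑ j ∈ range n, (j:ℝ)^2 = (n:ℝ) * ((n:ℝ) - 1) * (2*(n:ℝ) - 1) / 6 := by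
  induction n with
  | zero => simp
  | succ n ih => rw [Finset.sum_range_succ, ih]; push_cast; ring

lemma geom_sum_zero_of_ne_one (N : ℕ) (z : ℂ) (hzN : z ^ N = 1) (hz1 : z ≠ 1) :
    ∑ j ∈ range N, z ^ j = 0 := by
  have h := geom_sum_mul z N
  rw [hzN, sub_self] at h
  exact (mul_eq_zero.mp h).resolve_right (sub_ne_zero.mpr hz1)

lemma key_mul (N : ℕ) (z : ℂ) (hzN : z ^ N = 1) (hz1 : z ≠ 1) :
    (∑ j ∈ range N, (j:ℂ) * z ^ j) * (z - 1) = N := by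
  have hgeom := geom_sum_zero_of_ne_one N z hzN hz1
  have h2 : (∑ j ∈ range N, (j:ℂ) * z ^ j) * (z - 1)
      = (∑ j ∈ range N, (((j+1:ℕ):ℂ) * z ^ (j+1) - (j:ℂ) * z ^ j)) - z * ∑ j ∈ range N, z ^ j := by
    rw [Finset.sum_mul, Finset.mul_sum, ← Finset.sum_sub_distrib]
    apply Finset.sum_congr rfl
    intro j _
    push_cast
    ring
  rw [h2, Finset.sum_range_sub (fun j => (j:ℂ) * z ^ j), hgeom, hzN]
  push_cast
  ring

lemma ico_geom_sum (N : ℕ) (hN : 2 ≤ N) (z : ℂ) (hzN : z ^ N = 1) :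
    ∑ k ∈ Finset.Ico 1 N, z ^ k = (if z = 1 then (N:ℂ) else 0) - 1 := by
  have h0 : (0:ℕ) < N := by omega
  have hsplit := Finset.sum_eq_sum_Ico_succ_bot h0 (fun k => z ^ k)
  by_cases hz : z = 1
  · subst hz
    simp only [if_pos rfl, one_pow]
    rw [Finset.sum_const, nsmul_eq_mul, Nat.card_Ico, mul_one, Nat.cast_sub (by omega : 1 ≤ N)]
    simp
  · have hgeom : ∑ k ∈ Finset.Ico 0 N, z ^ k = 0 := by
      rw [← Finset.range_eq_Ico]; exact geom_sum_zero_of_ne_one N z hzN hz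
    rw [hgeom] at hsplit
    rw [if_neg hz]
    simp only [pow_zero, zero_add] at hsplit ⊢
    linear_combination -hsplit

/-- For every integer `N ≥ 2`, the sum `ν_N = ∑_{k=1}^{N-1} 1/|e^{2πik/N} - 1|²`
equals `(N² - 1)/12`. -/
theorem nu_N_eq (N : ℕ) (hN : 2 ≤ N) :
    ∑ k ∈ Finset.Icc 1 (N - 1),
        1 / ‖Complex.exp (2 * Real.pi * Complex.I * k / N) - 1‖ ^ 2
      = ((N : ℝ) ^ 2 - 1) / 12 := by
  have hN0 : (N : ℝ) ≠ 0 := by positivity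
  have hN0' : N ≠ 0 := by omega
  set c : ℂ := Complex.exp (2 * Real.pi * Complex.I / N) with hc_def
  have hc : IsPrimitiveRoot c N := Complex.isPrimitiveRoot_exp N hN0'
  have hcN : c ^ N = 1 := hc.pow_eq_one
  have hc0 : c ≠ 0 := fun h => by simp [h, zero_pow hN0'] at hcN
  have hnorm : ‖c‖ = 1 := norm_eq_one_of_pow_eq_one hcN hN0'
  -- conj c = c ^ (N-1)
  have hconjc : (starRingEnd ℂ) c = c ^ (N-1) := by
    have h1 : c * (starRingEnd ℂ) c = 1 := by
      rw [Complex.mul_conj, Complex.normSq_eq_norm_sq, hnorm]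
      norm_num
    have h2 : c * c ^ (N-1) = 1 := by
      rw [← pow_succ', Nat.sub_add_cancel (by omega : 1 ≤ N), hcN]
    exact mul_left_cancel₀ hc0 (h1.trans h2.symm)
  -- index set
  have hIcc : Finset.Icc 1 (N-1) = Finset.Ico 1 N := by
    rw [← Finset.Ico_add_one_right_eq_Icc]
    congr 1
    omega
  -- g k
  set g : ℕ → ℂ := fun k => ∑ j ∈ range N, (j:ℂ) * (c ^ k) ^ j with hg_def
  -- each term equals normSq (g k) / N^2
  have hterm : ∀ k ∈ Finset.Ico 1 N,
      1 / ‖Complex.exp (2 * Real.pi * Complex.I * k / N) - 1‖ ^ 2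
        = Complex.normSq (g k) / (N:ℝ)^2 := by
    intro k hk
    simp only [Finset.mem_Ico] at hk
    have hexp : Complex.exp (2 * Real.pi * Complex.I * k / N) = c ^ k := by
      rw [hc_def, ← Complex.exp_nat_mul]
      congr 1
      ring
    have hzN : (c ^ k) ^ N = 1 := by rw [← pow_mul, mul_comm, pow_mul, hcN, one_pow]
    have hz1 : c ^ k ≠ 1 := by
      intro h
      have hd := (hc.pow_eq_one_iff_dvd k).mp h
      exact absurd (Nat.le_of_dvd (by omega) hd) (by omega)
    have hkey := key_mul N (c ^ k) hzN hz1
    have hns : Complex.normSq (g k) * Complex.normSq (c ^ k - 1) = (N:ℝ)^2 := by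
      rw [← Complex.normSq_mul, hkey, Complex.normSq_natCast]
      ring
    have hns1 : Complex.normSq (c ^ k - 1) ≠ 0 := by
      intro h
      rw [h, mul_zero] at hns
      exact (pow_ne_zero 2 hN0) hns.symm
    rw [hexp, Complex.sq_norm]
    field_simp
    linarith [hns]
  rw [hIcc, Finset.sum_congr rfl hterm, ← Finset.sum_div]
  -- the complex sum
  have hjl : ∀ j ∈ range N, ∀ l ∈ range N, (c ^ (j + (N-1)*l) = 1 ↔ j = l) := by
    intro j hj l hl
    rw [Finset.mem_range] at hj hl
    rw [hc.pow_eq_one_iff_dvd]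
    constructor
    · intro hdvd
      have h1 : (N:ℤ) ∣ ((j:ℤ) + ((N:ℤ)-1)*l) := by
        have := Int.natCast_dvd_natCast.mpr hdvd
        push_cast [Nat.cast_sub (by omega : 1 ≤ N)] at this
        convert this using 1
      have h2 : (N:ℤ) ∣ ((j:ℤ) - l) := by
        have h3 : (j:ℤ) - l = ((j:ℤ) + ((N:ℤ)-1)*l) - N*l := by ring
        rw [h3]
        exact dvd_sub h1 ⟨l, rfl⟩
      have h4 : ((j:ℤ) - l) = 0 := Int.eq_zero_of_abs_lt_dvd h2 (by
        rw [abs_lt]; constructor <;> push_cast <;> omega)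
      omega
    · intro h
      subst h
      refine ⟨j, ?_⟩
      have h1 := Nat.sub_mul N 1 j
      have h2 : j ≤ N * j := Nat.le_mul_of_pos_left j (by omega)
      omega
  have hSum : ∑ k ∈ Finset.Ico 1 N, Complex.normSq (g k)
      = (N:ℝ) * (∑ j ∈ range N, (j:ℝ)^2) - (∑ j ∈ range N, (j:ℝ))^2 := by
    have hC : ((∑ k ∈ Finset.Ico 1 N, Complex.normSq (g k) : ℝ) : ℂ)
        = (((N:ℝ) * (∑ j ∈ range N, (j:ℝ)^2) - (∑ j ∈ range N, (j:ℝ))^2 : ℝ) : ℂ) := by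
      push_cast
      calc (∑ k ∈ Finset.Ico 1 N, (Complex.normSq (g k) : ℂ))
          = ∑ k ∈ Finset.Ico 1 N, g k * (starRingEnd ℂ) (g k) := by
            simp [Complex.mul_conj]
        _ = ∑ k ∈ Finset.Ico 1 N, ∑ j ∈ range N, ∑ l ∈ range N,
              ((j:ℂ) * (l:ℂ)) * (c ^ (j + (N-1)*l)) ^ k := by
            apply Finset.sum_congr rfl
            intro k _
            have hconjg : (starRingEnd ℂ) (g k) = ∑ l ∈ range N, (l:ℂ) * ((c ^ (N-1)) ^ k) ^ l := by
              rw [hg_def]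
              simp only [map_sum, map_mul, map_pow, Complex.conj_natCast, hconjc]
            rw [hconjg, hg_def]
            rw [Finset.sum_mul_sum]
            apply Finset.sum_congr rfl; intro j _
            apply Finset.sum_congr rfl; intro l _
            simp only [← pow_mul]
            rw [mul_mul_mul_comm, ← pow_add]
            congr 2
            ring
        _ = ∑ j ∈ range N, ∑ l ∈ range N,
              ((j:ℂ) * (l:ℂ)) * ∑ k ∈ Finset.Ico 1 N, (c ^ (j + (N-1)*l)) ^ k := by
            rw [Finset.sum_comm]
            apply Finset.sum_congr rfl
            intro j _
            rw [Finset.sum_comm]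
            apply Finset.sum_congr rfl
            intro l _
            rw [Finset.mul_sum]
        _ = ∑ j ∈ range N, ∑ l ∈ range N,
              ((j:ℂ) * (l:ℂ)) * ((if j = l then (N:ℂ) else 0) - 1) := by
            apply Finset.sum_congr rfl; intro j hj
            apply Finset.sum_congr rfl; intro l hl
            congr 1
            rw [ico_geom_sum N hN _ (by rw [← pow_mul, mul_comm, pow_mul, hcN, one_pow])]
            congr 1
            by_cases h : j = l
            · rw [if_pos ((hjl j hj l hl).mpr h), if_pos h]
            · rw [if_neg (fun hh => h ((hjl j hj l hl).mp hh)), if_neg h]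
        _ = (N:ℂ) * (∑ j ∈ range N, (j:ℂ)^2) - (∑ j ∈ range N, (j:ℂ))^2 := by
            simp only [mul_sub, mul_one, Finset.sum_sub_distrib]
            congr 1
            · rw [Finset.mul_sum]
              apply Finset.sum_congr rfl
              intro j hj
              simp only [mul_ite, mul_zero]
              rw [Finset.sum_ite_eq, if_pos hj]
              ring
            · rw [sq, Finset.sum_mul_sum]
    exact Complex.ofReal_injective hC
  rw [hSum, sum_id_real, sum_sq_real]
  field_simp
  ring
end

section
/- For the polygonal configuration, the vector X₀ := Σ_{k=1}^{N−2} x_k / l(x_k, x₀)² (the sum over all outer vortices except x₀, weighted by inverse squared chord length to x₀) has components X₀·(1,0,0) = (N−2)(N−6)/(12 R sin α), X₀·(0,1,0) = 0, and X₀·(0,0,1) = N(N−2) cos α/(12 R sin² α). -/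
open Real Finset

/-- Euclidean dot product on `ℝ³`. -/
def dot3 (u v : Fin 3 → ℝ) : ℝ := u 0 * v 0 + u 1 * v 1 + u 2 * v 2

/-- Squared chord length between two points of the sphere of radius `R`. -/
def chordSq (R : ℝ) (u v : Fin 3 → ℝ) : ℝ := 2 * (R ^ 2 - dot3 u v)

private lemma sum_cast_range (m : ℕ) : ∑ i ∈ range m, (i:ℂ) = m*(m-1)/2 := by
  induction m with
  | zero => simp
  | succ m ih => rw [Finset.sum_range_succ, ih]; push_cast; ring

private lemma sum_sq_range (m : ℕ) : ∑ i ∈ range m, (i:ℂ)^2 = m*(m-1)*(2*m-1)/6 := by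
  induction m with
  | zero => simp
  | succ m ih => rw [Finset.sum_range_succ, ih]; push_cast; ring

private lemma telescope (z : ℂ) (m : ℕ) :
    (1-z) * ∑ j ∈ range m, (j:ℂ)*z^j = (∑ j ∈ range m, z^j) - 1 - ((m:ℂ)-1)*z^m := by
  induction m with
  | zero => simp
  | succ m ih =>
    rw [Finset.sum_range_succ, Finset.sum_range_succ (f := fun j => z^j), mul_add, ih]
    push_cast; ring

private lemma key (n : ℕ) (hn : 0 < n) (z : ℂ) (hz : z^n = 1) (h1 : z ≠ 1) :
    ∑ j ∈ range n, (j:ℂ)*z^j = -n * (1-z)⁻¹ := by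
  have h0 : (1:ℂ) - z ≠ 0 := sub_ne_zero.mpr (Ne.symm h1)
  have hgeom : ∑ j ∈ range n, z^j = 0 := by
    rw [geom_sum_eq h1, hz]; simp
  have h := telescope z n
  rw [hgeom, hz] at h
  have h2 : (1-z) * ∑ j ∈ range n, (j:ℂ)*z^j = -n := by linear_combination h
  rw [inv_eq_one_div, ← mul_div_assoc, mul_one, eq_div_iff h0]
  linear_combination h2

private lemma geomIcc (n : ℕ) (hn : 0 < n) (w : ℂ) (hw : w^n = 1) :
    ∑ k ∈ Icc 1 (n-1), w^k = (if w = 1 then (n:ℂ) else 0) - 1 := by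
  have hins : insert 0 (Icc 1 (n-1)) = range n := by
    ext k; simp only [Finset.mem_insert, Finset.mem_Icc, Finset.mem_range]; omega
  have h0 : 0 ∉ Icc 1 (n-1) := by simp
  have hr : ∑ k ∈ range n, w^k = if w = 1 then (n:ℂ) else 0 := by
    split_ifs with h
    · simp [h]
    · rw [geom_sum_eq h, hw]; simp
  rw [← hins, Finset.sum_insert h0] at hr
  rw [← hr, pow_zero]; ring

private lemma S1 (n : ℕ) (hn : 0 < n) :
    ∑ k ∈ Icc 1 (n-1), (1 - Complex.exp (2*Real.pi*Complex.I/n) ^ k)⁻¹ = ((n:ℂ)-1)/2 := by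
  set ω := Complex.exp (2*Real.pi*Complex.I/n) with hωdef
  have hprim : IsPrimitiveRoot ω n := Complex.isPrimitiveRoot_exp n hn.ne'
  have hωn : ω ^ n = 1 := hprim.pow_eq_one
  have hn0 : (n:ℂ) ≠ 0 := Nat.cast_ne_zero.mpr hn.ne'
  have hterm : ∀ k ∈ Icc 1 (n-1), (1 - ω ^ k)⁻¹
      = (-(n:ℂ))⁻¹ * ∑ j ∈ range n, (j:ℂ) * (ω ^ k) ^ j := by
    intro k hk
    simp only [mem_Icc] at hk
    have hne : ω ^ k ≠ 1 := hprim.pow_ne_one_of_pos_of_lt (by omega) (by omega)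
    have hpow : (ω ^ k) ^ n = 1 := by rw [← pow_mul, mul_comm, pow_mul, hωn, one_pow]
    rw [key n hn (ω^k) hpow hne]
    field_simp
  have hinner : ∀ j ∈ range n, (∑ k ∈ Icc 1 (n-1), (j:ℂ) * (ω^k)^j) = -(j:ℂ) := by
    intro j hj
    simp only [mem_range] at hj
    have hw : (ω^j)^n = 1 := by rw [← pow_mul, mul_comm, pow_mul, hωn, one_pow]
    have step : ∑ k ∈ Icc 1 (n-1), (j:ℂ)*(ω^k)^j = (j:ℂ) * ∑ k ∈ Icc 1 (n-1), (ω^j)^k := by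
      rw [Finset.mul_sum]
      exact Finset.sum_congr rfl fun k _ => by rw [← pow_mul, Nat.mul_comm k j, pow_mul]
    rw [step, geomIcc n hn _ hw]
    rcases Nat.eq_zero_or_pos j with h | h
    · simp [h]
    · have hne : ω^j ≠ 1 := hprim.pow_ne_one_of_pos_of_lt h.ne' hj
      rw [if_neg hne]; ring
  calc ∑ k ∈ Icc 1 (n-1), (1 - ω ^ k)⁻¹
      = ∑ k ∈ Icc 1 (n-1), (-(n:ℂ))⁻¹ * ∑ j ∈ range n, (j:ℂ) * (ω ^ k) ^ j :=
        Finset.sum_congr rfl hterm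
    _ = (-(n:ℂ))⁻¹ * ∑ j ∈ range n, ∑ k ∈ Icc 1 (n-1), (j:ℂ)*(ω^k)^j := by
        rw [← Finset.mul_sum, Finset.sum_comm]
    _ = (-(n:ℂ))⁻¹ * ∑ j ∈ range n, -(j:ℂ) := by rw [Finset.sum_congr rfl hinner]
    _ = ((n:ℂ)-1)/2 := by
        rw [Finset.sum_neg_distrib, sum_cast_range]
        field_simp

private lemma S2 (n : ℕ) (hn : 0 < n) :
    ∑ k ∈ Icc 1 (n-1), ((1 - Complex.exp (2*Real.pi*Complex.I/n) ^ k)⁻¹)^2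
      = ((n:ℂ)-1)*(5-(n:ℂ))/12 := by
  set ω := Complex.exp (2*Real.pi*Complex.I/n) with hωdef
  have hprim : IsPrimitiveRoot ω n := Complex.isPrimitiveRoot_exp n hn.ne'
  have hωn : ω ^ n = 1 := hprim.pow_eq_one
  have hn0 : (n:ℂ) ≠ 0 := Nat.cast_ne_zero.mpr hn.ne'
  -- step 1: per-k expansion into a double sum
  have hterm : ∀ k ∈ Icc 1 (n-1), ((1 - ω ^ k)⁻¹)^2
      = ((n:ℂ)^2)⁻¹ * ∑ i ∈ range n, ∑ j ∈ range n, (i:ℂ)*(j:ℂ)*(ω^(i+j))^k := by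
    intro k hk
    simp only [mem_Icc] at hk
    have hne : ω ^ k ≠ 1 := hprim.pow_ne_one_of_pos_of_lt (by omega) (by omega)
    have hpow : (ω ^ k) ^ n = 1 := by rw [← pow_mul, mul_comm, pow_mul, hωn, one_pow]
    have hkey := key n hn (ω^k) hpow hne
    have hsq : (∑ j ∈ range n, (j:ℂ)*(ω^k)^j)^2
        = ∑ i ∈ range n, ∑ j ∈ range n, (i:ℂ)*(j:ℂ)*(ω^(i+j))^k := by
      rw [sq, Finset.sum_mul_sum]
      refine Finset.sum_congr rfl fun i _ => Finset.sum_congr rfl fun j _ => ?_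
      have hpp : (ω^(i+j))^k = (ω^k)^i * (ω^k)^j := by
        rw [← pow_mul, ← pow_mul, ← pow_mul, ← pow_add]
        congr 1
        ring
      rw [hpp]; ring
    rw [← hsq, hkey]
    rw [mul_pow, neg_pow]
    field_simp
  -- step 2: swap sums and evaluate the inner geometric sums
  have hswap : ∑ k ∈ Icc 1 (n-1), ∑ i ∈ range n, ∑ j ∈ range n, (i:ℂ)*(j:ℂ)*(ω^(i+j))^k
      = ∑ i ∈ range n, ∑ j ∈ range n, (i:ℂ)*(j:ℂ)*((if ω^(i+j) = 1 then (n:ℂ) else 0) - 1) := by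
    rw [Finset.sum_comm]
    refine Finset.sum_congr rfl fun i _ => ?_
    rw [Finset.sum_comm]
    refine Finset.sum_congr rfl fun j _ => ?_
    have hw : (ω^(i+j))^n = 1 := by rw [← pow_mul, mul_comm, pow_mul, hωn, one_pow]
    calc ∑ k ∈ Icc 1 (n-1), (i:ℂ)*(j:ℂ)*(ω^(i+j))^k
        = (i:ℂ)*(j:ℂ) * ∑ k ∈ Icc 1 (n-1), (ω^(i+j))^k := by rw [Finset.mul_sum]
      _ = (i:ℂ)*(j:ℂ)*((if ω^(i+j) = 1 then (n:ℂ) else 0) - 1) := by rw [geomIcc n hn _ hw]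
  -- step 3: evaluate the double sum
  have hsplit : ∀ i ∈ range n, ∀ j ∈ range n,
      (i:ℂ)*(j:ℂ)*((if ω^(i+j) = 1 then (n:ℂ) else 0) - 1)
      = (if i + j = n then (i:ℂ)*(j:ℂ)*(n:ℂ) else 0) - (i:ℂ)*(j:ℂ) := by
    intro i hi j hj
    simp only [mem_range] at hi hj
    by_cases h : i + j = n
    · have hom : ω^(i+j) = 1 := by rw [h, hωn]
      rw [if_pos h, if_pos hom]; ring
    · rw [if_neg h]
      rcases Nat.eq_zero_or_pos (i+j) with h0 | h0
      · have hi0 : i = 0 := by omega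
        simp [hi0]
      · have hne : ω^(i+j) ≠ 1 := by
          intro heq
          obtain ⟨c, hc⟩ := (hprim.pow_eq_one_iff_dvd _).mp heq
          rcases c with _ | _ | c
          · omega
          · omega
          · have h2 : n*2 ≤ n*(c+1+1) := Nat.mul_le_mul_left n (by omega)
            omega
        rw [if_neg hne]; ring
  have hI : ∀ i ∈ range n, ∑ j ∈ range n, (if i+j = n then (i:ℂ)*(j:ℂ)*(n:ℂ) else 0)
      = (i:ℂ)*((n:ℂ)-(i:ℂ))*(n:ℂ) := by
    intro i hi; simp only [mem_range] at hi
    rcases Nat.eq_zero_or_pos i with h0 | h0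
    · subst h0; simp
    · rw [Finset.sum_eq_single (n - i)]
      · rw [if_pos (by omega)]
        have : ((n - i : ℕ) : ℂ) = (n:ℂ) - (i:ℂ) := by
          push_cast [Nat.cast_sub (le_of_lt hi)]; ring
        rw [this]
      · intro j hj hne
        rw [if_neg (by simp only [mem_range] at hj; omega)]
      · intro habs; exact absurd (Finset.mem_range.mpr (by omega)) habs
  have hdouble : ∑ i ∈ range n, ∑ j ∈ range n,
      (i:ℂ)*(j:ℂ)*((if ω^(i+j) = 1 then (n:ℂ) else 0) - 1)
      = (n:ℂ)^2*((n:ℂ)^2-1)/6 - ((n:ℂ)*((n:ℂ)-1)/2)^2 := by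
    calc ∑ i ∈ range n, ∑ j ∈ range n, (i:ℂ)*(j:ℂ)*((if ω^(i+j) = 1 then (n:ℂ) else 0) - 1)
        = ∑ i ∈ range n, ∑ j ∈ range n,
            ((if i + j = n then (i:ℂ)*(j:ℂ)*(n:ℂ) else 0) - (i:ℂ)*(j:ℂ)) :=
          Finset.sum_congr rfl fun i hi => Finset.sum_congr rfl fun j hj => hsplit i hi j hj
      _ = (∑ i ∈ range n, ∑ j ∈ range n, (if i + j = n then (i:ℂ)*(j:ℂ)*(n:ℂ) else 0))
          - ∑ i ∈ range n, ∑ j ∈ range n, (i:ℂ)*(j:ℂ) := by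
          rw [← Finset.sum_sub_distrib]
          exact Finset.sum_congr rfl fun i _ => by rw [← Finset.sum_sub_distrib]
      _ = (∑ i ∈ range n, (i:ℂ)*((n:ℂ)-(i:ℂ))*(n:ℂ))
          - (∑ i ∈ range n, (i:ℂ)) * (∑ j ∈ range n, (j:ℂ)) := by
          rw [Finset.sum_congr rfl hI, Finset.sum_mul_sum]
      _ = (n:ℂ)^2*((n:ℂ)^2-1)/6 - ((n:ℂ)*((n:ℂ)-1)/2)^2 := by
          have e1 : ∑ i ∈ range n, (i:ℂ)*((n:ℂ)-(i:ℂ))*(n:ℂ)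
              = (n:ℂ)^2*(∑ i ∈ range n, (i:ℂ)) - (n:ℂ)*(∑ i ∈ range n, (i:ℂ)^2) := by
            rw [Finset.mul_sum, Finset.mul_sum, ← Finset.sum_sub_distrib]
            exact Finset.sum_congr rfl fun i _ => by ring
          rw [e1, sum_cast_range, sum_sq_range]
          ring
  -- conclude
  calc ∑ k ∈ Icc 1 (n-1), ((1 - ω ^ k)⁻¹)^2
      = ∑ k ∈ Icc 1 (n-1), ((n:ℂ)^2)⁻¹ * ∑ i ∈ range n, ∑ j ∈ range n, (i:ℂ)*(j:ℂ)*(ω^(i+j))^k :=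
        Finset.sum_congr rfl hterm
    _ = ((n:ℂ)^2)⁻¹ * ((n:ℂ)^2*((n:ℂ)^2-1)/6 - ((n:ℂ)*((n:ℂ)-1)/2)^2) := by
        rw [← Finset.mul_sum, hswap, hdouble]
    _ = ((n:ℂ)-1)*(5-(n:ℂ))/12 := by
        field_simp
        ring

private lemma per_term (θ : ℝ) (z : ℂ) (hz : z = Complex.exp (θ * Complex.I)) (h1 : z ≠ 1) :
    ((1 - Real.cos θ : ℝ) : ℂ)⁻¹ = 2*(1-z)⁻¹ - 2*((1-z)⁻¹)^2 ∧
    ((Real.cos θ : ℝ) : ℂ) * ((1 - Real.cos θ : ℝ) : ℂ)⁻¹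
      = -1 + 2*(1-z)⁻¹ - 2*((1-z)⁻¹)^2 ∧
    ((Real.sin θ : ℝ) : ℂ) * ((1 - Real.cos θ : ℝ) : ℂ)⁻¹
      = Complex.I - 2*Complex.I*(1-z)⁻¹ := by
  have hz0 : z ≠ 0 := by rw [hz]; exact Complex.exp_ne_zero _
  have h1' : (1:ℂ) - z ≠ 0 := sub_ne_zero.mpr (Ne.symm h1)
  have hpl : z = Complex.cos θ + Complex.sin θ * Complex.I := by
    rw [hz, Complex.exp_mul_I]
  have hmn : z⁻¹ = Complex.cos θ - Complex.sin θ * Complex.I := by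
    rw [hz, ← Complex.exp_neg]
    have h' : -((θ:ℂ) * Complex.I) = (-(θ:ℂ)) * Complex.I := by ring
    rw [h', Complex.exp_mul_I, Complex.cos_neg, Complex.sin_neg]
    ring
  have hcos : Complex.cos (θ:ℂ) = (z + z⁻¹)/2 := by
    linear_combination -(hpl + hmn)/2
  have hsinI : Complex.sin (θ:ℂ) * Complex.I = (z - z⁻¹)/2 := by
    linear_combination -(hpl - hmn)/2
  have hsin' : Complex.sin (θ:ℂ) = -Complex.I*(z - z⁻¹)/2 := by
    linear_combination (-Complex.I)*hsinI + Complex.sin (θ:ℂ) * Complex.I_sq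
  have hfact : (1:ℂ) - Complex.cos ↑θ = -(1-z)^2/(2*z) := by
    rw [hcos]
    field_simp
    ring
  have hcinv : (1 - Complex.cos (θ:ℂ))⁻¹ = 2*(1-z)⁻¹ - 2*((1-z)⁻¹)^2 := by
    rw [hfact, inv_div]
    field_simp
    ring
  refine ⟨?_, ?_, ?_⟩
  · push_cast
    exact hcinv
  · push_cast
    rw [hcinv, hcos]
    field_simp
    ring
  · push_cast
    rw [hcinv, hsin']
    field_simp
    ring

private lemma sums_real (n : ℕ) (hn : 2 ≤ n) :
    (∑ k ∈ Icc 1 (n-1), (1 - Real.cos (2*Real.pi*k/n))⁻¹) = ((n:ℝ)^2-1)/6 ∧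
    (∑ k ∈ Icc 1 (n-1), Real.cos (2*Real.pi*k/n) * (1 - Real.cos (2*Real.pi*k/n))⁻¹)
      = ((n:ℝ)-1)*((n:ℝ)-5)/6 ∧
    (∑ k ∈ Icc 1 (n-1), Real.sin (2*Real.pi*k/n) * (1 - Real.cos (2*Real.pi*k/n))⁻¹) = 0 := by
  have hn0 : 0 < n := by omega
  set ω := Complex.exp (2*Real.pi*Complex.I/n) with hωdef
  have hprim : IsPrimitiveRoot ω n := Complex.isPrimitiveRoot_exp n hn0.ne'
  have hnR : (n:ℝ) ≠ 0 := Nat.cast_ne_zero.mpr hn0.ne'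
  have hzk : ∀ k ∈ Icc 1 (n-1), ω ^ k = Complex.exp ((2*Real.pi*k/n : ℝ) * Complex.I) := by
    intro k _
    rw [hωdef, ← Complex.exp_nat_mul]
    congr 1
    push_cast
    ring
  have h1k : ∀ k ∈ Icc 1 (n-1), ω ^ k ≠ 1 := by
    intro k hk
    simp only [mem_Icc] at hk
    exact hprim.pow_ne_one_of_pos_of_lt (by omega) (by omega)
  have hS1 := S1 n hn0
  have hS2 := S2 n hn0
  refine ⟨?_, ?_, ?_⟩
  · have hC : ((∑ k ∈ Icc 1 (n-1), (1 - Real.cos (2*Real.pi*k/n))⁻¹ : ℝ) : ℂ)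
        = ((n:ℂ)^2-1)/6 := by
      push_cast
      calc ∑ k ∈ Icc 1 (n-1), ((1:ℂ) - Complex.cos (2*Real.pi*k/n))⁻¹
          = ∑ k ∈ Icc 1 (n-1), (2*(1-ω^k)⁻¹ - 2*((1-ω^k)⁻¹)^2) := by
            refine Finset.sum_congr rfl fun k hk => ?_
            have h := (per_term (2*Real.pi*k/n) (ω^k) (hzk k hk) (h1k k hk)).1
            push_cast at h
            exact h
        _ = 2*(∑ k ∈ Icc 1 (n-1), (1-ω^k)⁻¹) - 2*∑ k ∈ Icc 1 (n-1), ((1-ω^k)⁻¹)^2 := by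
            rw [Finset.sum_sub_distrib, Finset.mul_sum, Finset.mul_sum]
        _ = ((n:ℂ)^2-1)/6 := by rw [hS1, hS2]; ring
    exact_mod_cast hC
  · have hA : ((∑ k ∈ Icc 1 (n-1), Real.cos (2*Real.pi*k/n) * (1 - Real.cos (2*Real.pi*k/n))⁻¹ : ℝ) : ℂ)
        = ((n:ℂ)-1)*((n:ℂ)-5)/6 := by
      push_cast
      calc ∑ k ∈ Icc 1 (n-1), Complex.cos (2*Real.pi*k/n) * ((1:ℂ) - Complex.cos (2*Real.pi*k/n))⁻¹
          = ∑ k ∈ Icc 1 (n-1), (-1 + 2*(1-ω^k)⁻¹ - 2*((1-ω^k)⁻¹)^2) := by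
            refine Finset.sum_congr rfl fun k hk => ?_
            have h := (per_term (2*Real.pi*k/n) (ω^k) (hzk k hk) (h1k k hk)).2.1
            push_cast at h
            exact h
        _ = (∑ _k ∈ Icc 1 (n-1), (-1:ℂ)) + (2*(∑ k ∈ Icc 1 (n-1), (1-ω^k)⁻¹)
            - 2*∑ k ∈ Icc 1 (n-1), ((1-ω^k)⁻¹)^2) := by
            rw [Finset.mul_sum, Finset.mul_sum, ← Finset.sum_sub_distrib, ← Finset.sum_add_distrib]
            exact Finset.sum_congr rfl fun k _ => by ring
        _ = ((n:ℂ)-1)*((n:ℂ)-5)/6 := by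
            rw [hS1, hS2, Finset.sum_const]
            have hcard : (Icc 1 (n-1)).card = n - 1 := by
              rw [Nat.card_Icc]; omega
            rw [hcard]
            have : ((n - 1 : ℕ) : ℂ) = (n:ℂ) - 1 := by
              push_cast [Nat.cast_sub (by omega : 1 ≤ n)]; ring
            rw [nsmul_eq_mul, this]
            ring
    exact_mod_cast hA
  · have hB : ((∑ k ∈ Icc 1 (n-1), Real.sin (2*Real.pi*k/n) * (1 - Real.cos (2*Real.pi*k/n))⁻¹ : ℝ) : ℂ)
        = 0 := by
      push_cast
      calc ∑ k ∈ Icc 1 (n-1), Complex.sin (2*Real.pi*k/n) * ((1:ℂ) - Complex.cos (2*Real.pi*k/n))⁻¹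
          = ∑ k ∈ Icc 1 (n-1), (Complex.I - 2*Complex.I*(1-ω^k)⁻¹) := by
            refine Finset.sum_congr rfl fun k hk => ?_
            have h := (per_term (2*Real.pi*k/n) (ω^k) (hzk k hk) (h1k k hk)).2.2
            push_cast at h
            exact h
        _ = (∑ _k ∈ Icc 1 (n-1), Complex.I) - 2*Complex.I*(∑ k ∈ Icc 1 (n-1), (1-ω^k)⁻¹) := by
            rw [Finset.mul_sum, ← Finset.sum_sub_distrib]
        _ = 0 := by
            rw [hS1, Finset.sum_const]
            have hcard : (Icc 1 (n-1)).card = n - 1 := by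
              rw [Nat.card_Icc]; omega
            rw [hcard]
            have : ((n - 1 : ℕ) : ℂ) = (n:ℂ) - 1 := by
              push_cast [Nat.cast_sub (by omega : 1 ≤ n)]; ring
            rw [nsmul_eq_mul, this]
            ring
    exact_mod_cast hB

/-- Components of `X₀ = ∑_{k=1}^{N-2} x_k / l(x_k, x₀)²` for the polygonal
configuration of `N-1` outer vortices at opening angle `α` on the sphere of radius `R`. -/
theorem X0_components (R : ℝ) (hR : 0 < R) (N : ℕ) (hN : 3 ≤ N)
    (α : ℝ) (hα : α ∈ Set.Ioo 0 π)
    (x : ℕ → Fin 3 → ℝ)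
    (hx : ∀ k, x k = ![R * Real.sin α * Real.cos (2 * π * k / ((N : ℝ) - 1)),
                       R * Real.sin α * Real.sin (2 * π * k / ((N : ℝ) - 1)),
                       R * Real.cos α])
    (X₀ : Fin 3 → ℝ)
    (hX₀ : X₀ = ∑ k ∈ Finset.Icc 1 (N - 2), (chordSq R (x k) (x 0))⁻¹ • x k) :
    dot3 X₀ ![1, 0, 0] = ((N : ℝ) - 2) * ((N : ℝ) - 6) / (12 * R * Real.sin α) ∧
    dot3 X₀ ![0, 1, 0] = 0 ∧
    dot3 X₀ ![0, 0, 1] = (N : ℝ) * ((N : ℝ) - 2) * Real.cos α / (12 * R * (Real.sin α) ^ 2) := by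
  obtain ⟨hα0, hαπ⟩ := hα
  have hs : Real.sin α ≠ 0 := (Real.sin_pos_of_pos_of_lt_pi hα0 hαπ).ne'
  have hRne : R ≠ 0 := hR.ne'
  set n := N - 1 with hn_def
  have hn2 : 2 ≤ n := by omega
  have hNn : (N:ℝ) - 1 = (n:ℝ) := by
    rw [hn_def]
    push_cast [Nat.cast_sub (by omega : 1 ≤ N)]
    ring
  have hIcc : Finset.Icc 1 (N-2) = Finset.Icc 1 (n-1) := by
    rw [show N-2 = n-1 by omega]
  obtain ⟨hC, hA, hB⟩ := sums_real n hn2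
  have hx0 : x 0 = ![R * Real.sin α, 0, R * Real.cos α] := by
    rw [hx 0]
    norm_num
  have hx0k : ∀ k:ℕ, x k 0 = R * Real.sin α * Real.cos (2*Real.pi*k/(n:ℝ)) := by
    intro k; rw [hx k, hNn]; simp
  have hx1k : ∀ k:ℕ, x k 1 = R * Real.sin α * Real.sin (2*Real.pi*k/(n:ℝ)) := by
    intro k; rw [hx k, hNn]; simp
  have hx2k : ∀ k:ℕ, x k 2 = R * Real.cos α := by
    intro k; rw [hx k]; simp
  have hchord : ∀ k:ℕ, chordSq R (x k) (x 0)
      = 2*R^2*Real.sin α^2 * (1 - Real.cos (2*Real.pi*k/(n:ℝ))) := by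
    intro k
    simp only [chordSq, dot3]
    rw [hx k, hx0, hNn]
    simp only [Matrix.cons_val_zero, Matrix.cons_val_one, Matrix.head_cons]
    have h2 : (![R * Real.sin α * Real.cos (2*Real.pi*k/(n:ℝ)),
        R * Real.sin α * Real.sin (2*Real.pi*k/(n:ℝ)), R * Real.cos α] : Fin 3 → ℝ) 2
        = R * Real.cos α := by simp
    have h2' : (![R * Real.sin α, 0, R * Real.cos α] : Fin 3 → ℝ) 2 = R * Real.cos α := by simp
    rw [h2, h2']
    linear_combination (-2*R^2) * Real.sin_sq α
  have key1 : (2*R^2*Real.sin α^2)⁻¹ * (R * Real.sin α) = (2*R*Real.sin α)⁻¹ := by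
    field_simp
  have key2 : (2*R^2*Real.sin α^2)⁻¹ * R = (2*R*Real.sin α^2)⁻¹ := by
    field_simp
  have hsum0 : ∑ k ∈ Finset.Icc 1 (N-2), (chordSq R (x k) (x 0))⁻¹ * x k 0
      = ((N:ℝ)-2)*((N:ℝ)-6)/(12*R*Real.sin α) := by
    rw [hIcc]
    calc ∑ k ∈ Finset.Icc 1 (n-1), (chordSq R (x k) (x 0))⁻¹ * x k 0
        = ∑ k ∈ Finset.Icc 1 (n-1), (2*R*Real.sin α)⁻¹
            * (Real.cos (2*Real.pi*k/(n:ℝ)) * (1 - Real.cos (2*Real.pi*k/(n:ℝ)))⁻¹) := by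
          refine Finset.sum_congr rfl fun k _ => ?_
          rw [hchord k, hx0k k, mul_inv, ← key1]
          ring
      _ = (2*R*Real.sin α)⁻¹ * (((n:ℝ)-1)*((n:ℝ)-5)/6) := by
          rw [← Finset.mul_sum, hA]
      _ = ((N:ℝ)-2)*((N:ℝ)-6)/(12*R*Real.sin α) := by
          rw [← hNn]
          field_simp
          ring
  have hsum1 : ∑ k ∈ Finset.Icc 1 (N-2), (chordSq R (x k) (x 0))⁻¹ * x k 1 = 0 := by
    rw [hIcc]
    calc ∑ k ∈ Finset.Icc 1 (n-1), (chordSq R (x k) (x 0))⁻¹ * x k 1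
        = ∑ k ∈ Finset.Icc 1 (n-1), (2*R*Real.sin α)⁻¹
            * (Real.sin (2*Real.pi*k/(n:ℝ)) * (1 - Real.cos (2*Real.pi*k/(n:ℝ)))⁻¹) := by
          refine Finset.sum_congr rfl fun k _ => ?_
          rw [hchord k, hx1k k, mul_inv, ← key1]
          ring
      _ = 0 := by
          rw [← Finset.mul_sum, hB, mul_zero]
  have hsum2 : ∑ k ∈ Finset.Icc 1 (N-2), (chordSq R (x k) (x 0))⁻¹ * x k 2
      = (N:ℝ)*((N:ℝ)-2)*Real.cos α/(12*R*Real.sin α^2) := by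
    rw [hIcc]
    calc ∑ k ∈ Finset.Icc 1 (n-1), (chordSq R (x k) (x 0))⁻¹ * x k 2
        = ∑ k ∈ Finset.Icc 1 (n-1), (2*R*Real.sin α^2)⁻¹ * Real.cos α
            * (1 - Real.cos (2*Real.pi*k/(n:ℝ)))⁻¹ := by
          refine Finset.sum_congr rfl fun k _ => ?_
          rw [hchord k, hx2k k, mul_inv, ← key2]
          ring
      _ = (2*R*Real.sin α^2)⁻¹ * Real.cos α * (((n:ℝ)^2-1)/6) := by
          rw [← hC, Finset.mul_sum]
      _ = (N:ℝ)*((N:ℝ)-2)*Real.cos α/(12*R*Real.sin α^2) := by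
          rw [← hNn]
          field_simp
          ring
  have hdot : ∀ v : Fin 3 → ℝ, dot3 X₀ v
      = (∑ k ∈ Finset.Icc 1 (N-2), (chordSq R (x k) (x 0))⁻¹ * x k 0) * v 0
      + (∑ k ∈ Finset.Icc 1 (N-2), (chordSq R (x k) (x 0))⁻¹ * x k 1) * v 1
      + (∑ k ∈ Finset.Icc 1 (N-2), (chordSq R (x k) (x 0))⁻¹ * x k 2) * v 2 := by
    intro v
    rw [hX₀]
    simp only [dot3, Finset.sum_apply, Pi.smul_apply, smul_eq_mul]
  refine ⟨?_, ?_, ?_⟩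
  · rw [hdot]
    simp only [Matrix.cons_val_zero, Matrix.cons_val_one, Matrix.head_cons]
    rw [show ((![1,0,0] : Fin 3 → ℝ)) 2 = 0 by simp]
    rw [hsum0, hsum1, hsum2]
    ring
  · rw [hdot]
    simp only [Matrix.cons_val_zero, Matrix.cons_val_one, Matrix.head_cons]
    rw [show ((![0,1,0] : Fin 3 → ℝ)) 2 = 0 by simp]
    rw [hsum0, hsum1, hsum2]
    ring
  · rw [hdot]
    simp only [Matrix.cons_val_zero, Matrix.cons_val_one, Matrix.head_cons]
    rw [show ((![0,0,1] : Fin 3 → ℝ)) 2 = 1 by simp]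
    rw [hsum0, hsum1, hsum2]
    ring
end

section
/- Suppose cos α ≠ 0 and Γ₁ = −Γ/((N−1) cos α). Set λ₁ = −(Γ/(R² cos α sin² α))·((N−2)(N−6)/(12(N−1))), λ_c = −(Γ/(R² sin² α))·(cos α + N/(2(N−1))), and ξ_e = (0, 0, (Γ/(4π R² sin² α))·(1/(N−1) + cos α)). Then the polygonal configuration satisfies the relative equilibrium equations: for each outer vortex x_m (m = 0,…,N−2), Σ_{n≠m, 0≤n≤N−2} Γ₁ x_n / l(x_n,x_m)² + Γ x_c / l(x_c,x_m)² = λ₁ x_m + 2πR ξ_e, and for the central vortex, Σ_{k=0}^{N−2} Γ₁ x_k / l(x_k,x_c)² = λ_c x_c + 2πR ξ_e. -/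
open Real Finset

namespace VAux


lemma sum_cast_id (n : ℕ) : ∑ k ∈ Finset.range n, (k : ℂ) = n * (n - 1) / 2 := by
  induction n with
  | zero => simp
  | succ n ih => rw [Finset.sum_range_succ, ih]; push_cast; ring

lemma sum_cast_sq (n : ℕ) : ∑ k ∈ Finset.range n, (k : ℂ)^2 = n * (n - 1) * (2*n - 1) / 6 := by
  induction n with
  | zero => simp
  | succ n ih => rw [Finset.sum_range_succ, ih]; push_cast; ring

lemma kern (M : ℕ) (z : ℂ) (hzM : z ^ M = 1) (hz : z ≠ 1) :
    (1 - z) * ∑ k ∈ Finset.range M, (k : ℂ) * z ^ k = -(M : ℂ) := by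
  have hgeom : ∑ k ∈ Finset.range M, z ^ k = 0 := by
    rw [geom_sum_eq hz, hzM]; simp
  have htel := Finset.sum_range_sub (fun k => (k : ℂ) * z ^ k) M
  simp only [Nat.cast_zero] at htel
  have hsplit : ∑ k ∈ Finset.range M, ((↑(k+1) : ℂ) * z ^ (k+1) - (k:ℂ) * z ^ k)
      = (z - 1) * (∑ k ∈ Finset.range M, (k:ℂ) * z ^ k) + z * ∑ k ∈ Finset.range M, z ^ k := by
    rw [Finset.mul_sum, Finset.mul_sum, ← Finset.sum_add_distrib]
    apply Finset.sum_congr rfl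
    intro k _
    push_cast [pow_succ]
    ring
  rw [hsplit, hgeom, hzM] at htel
  linear_combination -htel

lemma geomG (M : ℕ) (hM : M ≠ 0) (ω : ℂ) (hω : IsPrimitiveRoot ω M) (c : ℕ) :
    ∑ j ∈ Finset.range M, ω ^ (c * j) = if M ∣ c then (M : ℂ) else 0 := by
  by_cases h : M ∣ c
  · simp only [h, if_true]
    have h1 : ω ^ c = 1 := (hω.pow_eq_one_iff_dvd c).mpr h
    calc ∑ j ∈ Finset.range M, ω ^ (c*j) = ∑ _j ∈ Finset.range M, (1:ℂ) := by
          refine Finset.sum_congr rfl fun j _ => ?_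
          rw [pow_mul, h1, one_pow]
      _ = M := by simp
  · simp only [h, if_false]
    have h1 : ω ^ c ≠ 1 := fun hh => h ((hω.pow_eq_one_iff_dvd c).mp hh)
    have h2 : ∑ j ∈ Finset.range M, (ω ^ c) ^ j = 0 := by
      rw [geom_sum_eq h1, ← pow_mul, mul_comm c M, pow_mul, hω.pow_eq_one, one_pow]
      simp
    calc ∑ j ∈ Finset.range M, ω ^ (c*j) = ∑ j ∈ Finset.range M, (ω ^ c) ^ j := by
          refine Finset.sum_congr rfl fun j _ => ?_
          rw [← pow_mul]
      _ = 0 := h2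

lemma bigE (M : ℕ) (hM : M ≠ 0) (ω : ℂ) (hω : IsPrimitiveRoot ω M) (a : ℕ) :
    ∑ j ∈ Finset.range M, ω ^ (a*j) * (∑ k ∈ Finset.range M, (k:ℂ) * ω ^ (j*k))^2
    = ∑ k ∈ Finset.range M, ∑ l ∈ Finset.range M,
        (k:ℂ) * l * (if M ∣ (a+k+l) then (M:ℂ) else 0) := by
  have step1 : ∀ j, ω ^ (a*j) * (∑ k ∈ Finset.range M, (k:ℂ) * ω ^ (j*k))^2
      = ∑ k ∈ Finset.range M, ∑ l ∈ Finset.range M, (k:ℂ)*l* ω^((a+k+l)*j) := by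
    intro j
    rw [sq, Finset.sum_mul_sum, Finset.mul_sum]
    refine Finset.sum_congr rfl fun k _ => ?_
    rw [Finset.mul_sum]
    refine Finset.sum_congr rfl fun l _ => ?_
    have he : (a+k+l)*j = a*j + (j*k + j*l) := by ring
    rw [he, pow_add, pow_add]
    ring
  calc ∑ j ∈ Finset.range M, ω ^ (a*j) * (∑ k ∈ Finset.range M, (k:ℂ) * ω ^ (j*k))^2
      = ∑ j ∈ Finset.range M, ∑ k ∈ Finset.range M, ∑ l ∈ Finset.range M,
          (k:ℂ)*l* ω^((a+k+l)*j) := Finset.sum_congr rfl fun j _ => step1 j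
    _ = ∑ k ∈ Finset.range M, ∑ j ∈ Finset.range M, ∑ l ∈ Finset.range M,
          (k:ℂ)*l* ω^((a+k+l)*j) := Finset.sum_comm
    _ = ∑ k ∈ Finset.range M, ∑ l ∈ Finset.range M, ∑ j ∈ Finset.range M,
          (k:ℂ)*l* ω^((a+k+l)*j) := Finset.sum_congr rfl fun k _ => Finset.sum_comm
    _ = ∑ k ∈ Finset.range M, ∑ l ∈ Finset.range M,
          (k:ℂ) * l * (if M ∣ (a+k+l) then (M:ℂ) else 0) := by
        refine Finset.sum_congr rfl fun k _ => Finset.sum_congr rfl fun l _ => ?_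
        rw [← Finset.mul_sum, geomG M hM ω hω (a+k+l)]

lemma dvd_iff1 (M k l : ℕ) (hM : 2 ≤ M) (hk : k < M) (hl : l < M) :
    M ∣ (1+k+l) ↔ l = M-1-k := by
  constructor
  · rintro ⟨c, hc⟩
    match c with
    | 0 => omega
    | 1 => omega
    | (c+2) =>
      have := Nat.mul_le_mul_left M (show 2 ≤ c+2 by omega)
      omega
  · intro h; exact ⟨1, by omega⟩

lemma dvd_iff2 (M k l : ℕ) (hM : 2 ≤ M) (hk : k < M) (hl : l < M) :
    M ∣ (2+k+l) ↔ l = (if k = M-1 then M-1 else M-2-k) := by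
  constructor
  · rintro ⟨c, hc⟩
    match c with
    | 0 => omega
    | 1 =>
      have hkne : k ≠ M-1 := by omega
      rw [if_neg hkne]; omega
    | 2 =>
      have hkeq : k = M-1 := by omega
      rw [if_pos hkeq]; omega
    | (c+3) =>
      have := Nat.mul_le_mul_left M (show 3 ≤ c+3 by omega)
      omega
  · intro h
    by_cases hkc : k = M-1
    · rw [if_pos hkc] at h; exact ⟨2, by omega⟩
    · rw [if_neg hkc] at h; exact ⟨1, by omega⟩

lemma dsum1 (M : ℕ) (hM : 2 ≤ M) :
    ∑ k ∈ Finset.range M, ∑ l ∈ Finset.range M,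
        (k:ℂ) * l * (if M ∣ (1+k+l) then (M:ℂ) else 0)
    = (M:ℂ)^2 * ((M:ℂ)-1) * ((M:ℂ)-2) / 6 := by
  have h1 : ∀ k ∈ Finset.range M, ∑ l ∈ Finset.range M,
      (k:ℂ) * l * (if M ∣ (1+k+l) then (M:ℂ) else 0)
      = (M:ℂ)*((M:ℂ)-1)*(k:ℂ) - (M:ℂ)*(k:ℂ)^2 := by
    intro k hk
    rw [Finset.mem_range] at hk
    have hcong : ∀ l ∈ Finset.range M, (k:ℂ) * l * (if M ∣ (1+k+l) then (M:ℂ) else 0)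
        = if l = M-1-k then (k:ℂ) * l * M else 0 := by
      intro l hl
      rw [Finset.mem_range] at hl
      have hiff := dvd_iff1 M k l hM hk hl
      by_cases hc : l = M-1-k
      · rw [if_pos hc, if_pos (hiff.mpr hc)]
      · rw [if_neg hc, if_neg (fun h => hc (hiff.mp h)), mul_zero]
    rw [Finset.sum_congr rfl hcong,
      Finset.sum_ite_eq' (Finset.range M) (M-1-k) (fun l => (k:ℂ)*l*M)]
    rw [if_pos (Finset.mem_range.mpr (by omega))]
    have hcast : ((M-1-k : ℕ):ℂ) = (M:ℂ)-1-(k:ℂ) := by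
      have h3 : M-1-k = M - (1+k) := by omega
      rw [h3, Nat.cast_sub (by omega)]
      push_cast; ring
    rw [hcast]; ring
  rw [Finset.sum_congr rfl h1, Finset.sum_sub_distrib, ← Finset.mul_sum, ← Finset.mul_sum,
    sum_cast_id, sum_cast_sq]
  ring

lemma dsum2 (M : ℕ) (hM : 2 ≤ M) :
    ∑ k ∈ Finset.range M, ∑ l ∈ Finset.range M,
        (k:ℂ) * l * (if M ∣ (2+k+l) then (M:ℂ) else 0)
    = (M:ℂ)^2 * ((M:ℂ)^2-1) / 6 := by
  have h1 : ∀ k ∈ Finset.range M, ∑ l ∈ Finset.range M,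
      (k:ℂ) * l * (if M ∣ (2+k+l) then (M:ℂ) else 0)
      = (k:ℂ) * ((if k = M-1 then M-1 else M-2-k : ℕ):ℂ) * M := by
    intro k hk
    rw [Finset.mem_range] at hk
    have hcong : ∀ l ∈ Finset.range M, (k:ℂ) * l * (if M ∣ (2+k+l) then (M:ℂ) else 0)
        = if l = (if k = M-1 then M-1 else M-2-k) then (k:ℂ) * l * M else 0 := by
      intro l hl
      rw [Finset.mem_range] at hl
      have hiff := dvd_iff2 M k l hM hk hl
      by_cases hc : l = (if k = M-1 then M-1 else M-2-k)
      · rw [if_pos hc, if_pos (hiff.mpr hc)]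
      · rw [if_neg hc, if_neg (fun h => hc (hiff.mp h)), mul_zero]
    rw [Finset.sum_congr rfl hcong,
      Finset.sum_ite_eq' (Finset.range M)
        (if k = M-1 then M-1 else M-2-k) (fun l => (k:ℂ)*l*M)]
    rw [if_pos (Finset.mem_range.mpr (by split <;> omega))]
  rw [Finset.sum_congr rfl h1]
  have hsplit := Finset.sum_range_succ
    (fun k => (k:ℂ) * ((if k = M-1 then M-1 else M-2-k : ℕ):ℂ) * M) (M-1)
  rw [show M-1+1 = M by omega] at hsplit
  rw [hsplit]
  have h2 : ∀ k ∈ Finset.range (M-1),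
      (k:ℂ) * ((if k = M-1 then M-1 else M-2-k : ℕ):ℂ) * M
      = ((M:ℂ)*((M:ℂ)-2))*(k:ℂ) - (M:ℂ)*(k:ℂ)^2 := by
    intro k hk
    rw [Finset.mem_range] at hk
    rw [if_neg (by omega : ¬ k = M-1)]
    have hcast : ((M-2-k : ℕ):ℂ) = (M:ℂ)-2-(k:ℂ) := by
      have h3 : M-2-k = M - (2+k) := by omega
      rw [h3, Nat.cast_sub (by omega)]
      push_cast; ring
    rw [hcast]; ring
  have h3 : (((M-1:ℕ)):ℂ) = (M:ℂ)-1 := by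
    rw [Nat.cast_sub (by omega)]; push_cast; ring
  rw [Finset.sum_congr rfl h2, Finset.sum_sub_distrib, ← Finset.mul_sum, ← Finset.mul_sum,
    sum_cast_id, sum_cast_sq, if_pos rfl, h3]
  ring

lemma omega_pow (M j : ℕ) :
    (Complex.exp (2*π*Complex.I/(M:ℂ))) ^ j
    = ((Real.cos (2*π*j/(M:ℝ)) : ℝ):ℂ) + ((Real.sin (2*π*j/(M:ℝ)) : ℝ):ℂ) * Complex.I := by
  rw [← Complex.exp_nat_mul]
  rw [show (j:ℂ) * (2*π*Complex.I/(M:ℂ)) = ((2*π*j/(M:ℝ) : ℝ):ℂ) * Complex.I by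
    push_cast; ring]
  rw [Complex.exp_mul_I, Complex.ofReal_cos, Complex.ofReal_sin]

lemma cos_lt_one (M j : ℕ) (hM : 2 ≤ M) (hj1 : 1 ≤ j) (hj2 : j < M) :
    Real.cos (2*π*j/(M:ℝ)) < 1 := by
  have hne : Real.cos (2*π*j/(M:ℝ)) ≠ 1 := by
    intro h
    rw [Real.cos_eq_one_iff] at h
    obtain ⟨n, hn⟩ := h
    have hM0 : (0:ℝ) < M := by positivity
    have h2 : (2*π) * ((n:ℝ)*M) = (2*π) * j := by
      have hMne : (M:ℝ) ≠ 0 := ne_of_gt hM0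
      field_simp at hn
      linear_combination (2*π) * hn
    have h3 : (n:ℝ)*M = j :=
      mul_left_cancel₀ (by positivity) h2
    have h4 : (n:ℤ) * M = j := by exact_mod_cast h3
    have hM2 : (2:ℤ) ≤ (M:ℤ) := by exact_mod_cast hM
    have hj1' : (1:ℤ) ≤ (j:ℤ) := by exact_mod_cast hj1
    have hj2' : (j:ℤ) < (M:ℤ) := by exact_mod_cast hj2
    rcases le_or_gt n 0 with hn0 | hn0
    · have : (n:ℤ)*M ≤ 0 := mul_nonpos_iff.mpr (Or.inr ⟨hn0, by omega⟩)
      omega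
    · have : (M:ℤ) ≤ (n:ℤ)*M := le_mul_of_one_le_left (by omega) hn0
      omega
  exact lt_of_le_of_ne (Real.cos_le_one _) hne

lemma inv_one_sub_cos (M j : ℕ) (hM : 2 ≤ M) (hj1 : 1 ≤ j) (hj2 : j < M) :
    (1:ℂ)/(1 - ((Real.cos (2*π*j/(M:ℝ)) : ℝ):ℂ))
    = -2 * (Complex.exp (2*π*Complex.I/(M:ℂ)))^j *
        (∑ k ∈ Finset.range M, (k:ℂ) *
          (Complex.exp (2*π*Complex.I/(M:ℂ))) ^ (j*k))^2 / (M:ℂ)^2 := by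
  set ω := Complex.exp (2*π*Complex.I/(M:ℂ)) with hωdef
  have hM0 : M ≠ 0 := by omega
  have hω : IsPrimitiveRoot ω M := Complex.isPrimitiveRoot_exp M hM0
  have hz1 : ω^j ≠ 1 := hω.pow_ne_one_of_pos_of_lt (by omega) hj2
  have hzM : (ω^j)^M = 1 := by
    rw [← pow_mul, mul_comm, pow_mul, hω.pow_eq_one, one_pow]
  have hkern : (1 - ω^j) * (∑ k ∈ Finset.range M, (k:ℂ) * ω^(j*k)) = -(M:ℂ) := by
    have h := kern M (ω^j) hzM hz1
    rw [← h]
    congr 1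
    refine Finset.sum_congr rfl fun k _ => ?_
    rw [pow_mul]
  set K := ∑ k ∈ Finset.range M, (k:ℂ) * ω^(j*k) with hKdef
  have hK2 : (1-ω^j)^2 * K^2 = (M:ℂ)^2 := by
    rw [← mul_pow, hkern]; ring
  have hzc : ω^j = ((Real.cos (2*π*j/(M:ℝ)):ℝ):ℂ)
      + ((Real.sin (2*π*j/(M:ℝ)):ℝ):ℂ)*Complex.I := omega_pow M j
  set c : ℝ := Real.cos (2*π*j/(M:ℝ)) with hcdef
  set s : ℝ := Real.sin (2*π*j/(M:ℝ)) with hsdef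
  have hcs : ((s:ℂ))^2 + ((c:ℂ))^2 = 1 := by
    exact_mod_cast Real.sin_sq_add_cos_sq (2*π*j/(M:ℝ))
  have hchord : ((1:ℂ) - (c:ℂ)) * (-2*ω^j) = (1-ω^j)^2 := by
    rw [hzc]
    linear_combination hcs - (s:ℂ)^2*Complex.I_sq
  have hclt := cos_lt_one M j hM hj1 hj2
  have hcne : (1:ℂ) - (c:ℂ) ≠ 0 := by
    have h0 : (1:ℝ) - c ≠ 0 := ne_of_gt (by linarith)
    have := Complex.ofReal_ne_zero.mpr h0
    push_cast at this
    exact this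
  have hMne : (M:ℂ) ≠ 0 := Nat.cast_ne_zero.mpr hM0
  rw [div_eq_div_iff hcne (pow_ne_zero 2 hMne)]
  linear_combination -hK2 - K^2 * hchord

lemma sumIcoE (M : ℕ) (hM : 2 ≤ M) (a : ℕ) :
    ∑ j ∈ Finset.Ico 1 M, (Complex.exp (2*π*Complex.I/(M:ℂ)))^(a*j) *
      (∑ k ∈ Finset.range M, (k:ℂ) * (Complex.exp (2*π*Complex.I/(M:ℂ)))^(j*k))^2
    = (∑ k ∈ Finset.range M, ∑ l ∈ Finset.range M,
        (k:ℂ) * l * (if M ∣ (a+k+l) then (M:ℂ) else 0))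
      - ((M:ℂ)*((M:ℂ)-1)/2)^2 := by
  set ω := Complex.exp (2*π*Complex.I/(M:ℂ)) with hωd
  have hω : IsPrimitiveRoot ω M := Complex.isPrimitiveRoot_exp M (by omega)
  have hbig := bigE M (by omega) ω hω a
  have hsplit := Finset.sum_range_eq_add_Ico
    (fun j => ω^(a*j) * (∑ k ∈ Finset.range M, (k:ℂ) * ω^(j*k))^2) (by omega : 0 < M)
  have hzero : ω^(a*0) * (∑ k ∈ Finset.range M, (k:ℂ) * ω^(0*k))^2
      = ((M:ℂ)*((M:ℂ)-1)/2)^2 := by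
    simp only [Nat.mul_zero, Nat.zero_mul, pow_zero, mul_one, one_mul]
    rw [sum_cast_id]
  rw [hsplit] at hbig
  linear_combination hbig - hzero

lemma SI (M : ℕ) (hM : 2 ≤ M) :
    ∑ j ∈ Finset.Ico 1 M, 1/(1 - Real.cos (2*π*j/(M:ℝ))) = ((M:ℝ)^2-1)/6 := by
  have hM0 : M ≠ 0 := by omega
  have hMne : (M:ℂ) ≠ 0 := Nat.cast_ne_zero.mpr hM0
  set ω := Complex.exp (2*π*Complex.I/(M:ℂ)) with hωd
  have key : ((∑ j ∈ Finset.Ico 1 M, 1/(1 - Real.cos (2*π*j/(M:ℝ))) : ℝ) : ℂ)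
      = ((((M:ℝ)^2-1)/6 : ℝ) : ℂ) := by
    rw [Complex.ofReal_sum]
    have step : ∀ j ∈ Finset.Ico 1 M,
        ((1/(1 - Real.cos (2*π*j/(M:ℝ))) : ℝ) : ℂ)
        = (-2/(M:ℂ)^2) * (ω^(1*j) *
            (∑ k ∈ Finset.range M, (k:ℂ) * ω^(j*k))^2) := by
      intro j hj
      rw [Finset.mem_Ico] at hj
      have hinv := inv_one_sub_cos M j hM hj.1 hj.2
      rw [Complex.ofReal_div, Complex.ofReal_one, Complex.ofReal_sub, Complex.ofReal_one,
        hinv, one_mul]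
      ring
    rw [Finset.sum_congr rfl step, ← Finset.mul_sum, sumIcoE M hM 1, dsum1 M hM]
    push_cast
    field_simp
    ring
  exact_mod_cast key

lemma SIIandIII (M : ℕ) (hM : 2 ≤ M) :
    ((∑ j ∈ Finset.Ico 1 M,
        Real.cos (2*π*j/(M:ℝ))/(1 - Real.cos (2*π*j/(M:ℝ))) : ℝ) : ℂ)
    + ((∑ j ∈ Finset.Ico 1 M,
        Real.sin (2*π*j/(M:ℝ))/(1 - Real.cos (2*π*j/(M:ℝ))) : ℝ) : ℂ) * Complex.I
    = ((((M:ℝ)-1)*((M:ℝ)-5)/6 : ℝ) : ℂ) := by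
  have hM0 : M ≠ 0 := by omega
  have hMne : (M:ℂ) ≠ 0 := Nat.cast_ne_zero.mpr hM0
  set ω := Complex.exp (2*π*Complex.I/(M:ℂ)) with hωd
  rw [Complex.ofReal_sum, Complex.ofReal_sum, Finset.sum_mul, ← Finset.sum_add_distrib]
  have step : ∀ j ∈ Finset.Ico 1 M,
      ((Real.cos (2*π*j/(M:ℝ))/(1 - Real.cos (2*π*j/(M:ℝ))) : ℝ) : ℂ)
        + ((Real.sin (2*π*j/(M:ℝ))/(1 - Real.cos (2*π*j/(M:ℝ))) : ℝ) : ℂ) * Complex.I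
      = (-2/(M:ℂ)^2) * (ω^(2*j) *
          (∑ k ∈ Finset.range M, (k:ℂ) * ω^(j*k))^2) := by
    intro j hj
    rw [Finset.mem_Ico] at hj
    have hinv := inv_one_sub_cos M j hM hj.1 hj.2
    have hclt := cos_lt_one M j hM hj.1 hj.2
    have hcne : (1:ℂ) - ((Real.cos (2*π*j/(M:ℝ)) : ℝ):ℂ) ≠ 0 := by
      have h0 : (1:ℝ) - Real.cos (2*π*j/(M:ℝ)) ≠ 0 := ne_of_gt (by linarith)
      have h1 := Complex.ofReal_ne_zero.mpr h0
      rw [Complex.ofReal_sub, Complex.ofReal_one] at h1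
      exact h1
    have hlhs : ((Real.cos (2*π*j/(M:ℝ))/(1 - Real.cos (2*π*j/(M:ℝ))) : ℝ) : ℂ)
        + ((Real.sin (2*π*j/(M:ℝ))/(1 - Real.cos (2*π*j/(M:ℝ))) : ℝ) : ℂ) * Complex.I
        = (((Real.cos (2*π*j/(M:ℝ)) : ℝ):ℂ) + ((Real.sin (2*π*j/(M:ℝ)) : ℝ):ℂ) * Complex.I)
          * ((1:ℂ)/(1 - ((Real.cos (2*π*j/(M:ℝ)) : ℝ):ℂ))) := by
      rw [Complex.ofReal_div, Complex.ofReal_div, Complex.ofReal_sub, Complex.ofReal_one]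
      field_simp
    rw [hlhs, ← omega_pow M j, hinv]
    rw [show 2*j = j + j from two_mul j, pow_add]
    ring
  rw [Finset.sum_congr rfl step, ← Finset.mul_sum, sumIcoE M hM 2, dsum2 M hM]
  push_cast
  field_simp
  ring

lemma SII (M : ℕ) (hM : 2 ≤ M) :
    ∑ j ∈ Finset.Ico 1 M, Real.cos (2*π*j/(M:ℝ))/(1 - Real.cos (2*π*j/(M:ℝ)))
    = ((M:ℝ)-1)*((M:ℝ)-5)/6 := by
  have h := SIIandIII M hM
  set A := ∑ j ∈ Finset.Ico 1 M,
      Real.cos (2*π*j/(M:ℝ))/(1 - Real.cos (2*π*j/(M:ℝ))) with hA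
  set B := ∑ j ∈ Finset.Ico 1 M,
      Real.sin (2*π*j/(M:ℝ))/(1 - Real.cos (2*π*j/(M:ℝ))) with hB
  simpa using congrArg Complex.re h

lemma SIII (M : ℕ) (hM : 2 ≤ M) :
    ∑ j ∈ Finset.Ico 1 M, Real.sin (2*π*j/(M:ℝ))/(1 - Real.cos (2*π*j/(M:ℝ))) = 0 := by
  have h := SIIandIII M hM
  set A := ∑ j ∈ Finset.Ico 1 M,
      Real.cos (2*π*j/(M:ℝ))/(1 - Real.cos (2*π*j/(M:ℝ))) with hA
  set B := ∑ j ∈ Finset.Ico 1 M,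
      Real.sin (2*π*j/(M:ℝ))/(1 - Real.cos (2*π*j/(M:ℝ))) with hB
  simpa using congrArg Complex.im h

lemma SCS (M : ℕ) (hM : 2 ≤ M) :
    (∑ j ∈ Finset.range M, Real.cos (2*π*j/(M:ℝ))) = 0 ∧
    (∑ j ∈ Finset.range M, Real.sin (2*π*j/(M:ℝ))) = 0 := by
  set ω := Complex.exp (2*π*Complex.I/(M:ℂ)) with hωd
  have hω : IsPrimitiveRoot ω M := Complex.isPrimitiveRoot_exp M (by omega)
  have hg := geomG M (by omega) ω hω 1
  rw [if_neg (fun h => by have := Nat.le_of_dvd one_pos h; omega)] at hg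
  have hsplit : ∑ j ∈ Finset.range M, ω^(1*j)
      = ((∑ j ∈ Finset.range M, Real.cos (2*π*j/(M:ℝ)) : ℝ):ℂ)
        + ((∑ j ∈ Finset.range M, Real.sin (2*π*j/(M:ℝ)) : ℝ):ℂ) * Complex.I := by
    rw [Complex.ofReal_sum, Complex.ofReal_sum, Finset.sum_mul, ← Finset.sum_add_distrib]
    refine Finset.sum_congr rfl fun j _ => ?_
    rw [one_mul]
    exact omega_pow M j
  rw [hsplit] at hg
  set A := ∑ j ∈ Finset.range M, Real.cos (2*π*j/(M:ℝ)) with hA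
  set B := ∑ j ∈ Finset.range M, Real.sin (2*π*j/(M:ℝ)) with hB
  constructor
  · simpa using congrArg Complex.re hg
  · simpa using congrArg Complex.im hg

lemma cos_mod (M a : ℕ) (hM : M ≠ 0) :
    Real.cos (2*π*((a % M : ℕ):ℝ)/(M:ℝ)) = Real.cos (2*π*a/(M:ℝ)) := by
  have hMne : (M:ℝ) ≠ 0 := Nat.cast_ne_zero.mpr hM
  have h := congrArg (Nat.cast : ℕ → ℝ) (Nat.mod_add_div a M)
  push_cast at h
  have harg : 2*π*((a % M : ℕ):ℝ)/(M:ℝ)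
      = 2*π*a/(M:ℝ) - (((a/M : ℕ):ℤ):ℝ)*(2*π) := by
    rw [Int.cast_natCast]
    field_simp
    linear_combination h
  rw [harg, Real.cos_sub_int_mul_two_pi]

lemma sin_mod (M a : ℕ) (hM : M ≠ 0) :
    Real.sin (2*π*((a % M : ℕ):ℝ)/(M:ℝ)) = Real.sin (2*π*a/(M:ℝ)) := by
  have hMne : (M:ℝ) ≠ 0 := Nat.cast_ne_zero.mpr hM
  have h := congrArg (Nat.cast : ℕ → ℝ) (Nat.mod_add_div a M)
  push_cast at h
  have harg : 2*π*((a % M : ℕ):ℝ)/(M:ℝ)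
      = 2*π*a/(M:ℝ) - (((a/M : ℕ):ℤ):ℝ)*(2*π) := by
    rw [Int.cast_natCast]
    field_simp
    linear_combination h
  rw [harg, Real.sin_sub_int_mul_two_pi]

lemma reindex {G : Type*} [AddCommMonoid G] (M m : ℕ) (hM : 0 < M) (hm : m < M)
    (F : ℕ → G) :
    ∑ n ∈ (Finset.range M).erase m, F n = ∑ j ∈ Finset.Ico 1 M, F ((m + j) % M) := by
  have left_inv : ∀ n ∈ (Finset.range M).erase m, (m + (n + M - m) % M) % M = n := by
    intro n hn
    rw [Finset.mem_erase, Finset.mem_range] at hn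
    rw [Nat.add_mod_mod, show m + (n + M - m) = n + M by omega, Nat.add_mod_right]
    exact Nat.mod_eq_of_lt hn.2
  refine Finset.sum_nbij' (fun n => (n + M - m) % M) (fun j => (m + j) % M)
    ?_ ?_ left_inv ?_ ?_
  · intro n hn
    rw [Finset.mem_erase, Finset.mem_range] at hn
    rw [Finset.mem_Ico]
    refine ⟨?_, Nat.mod_lt _ hM⟩
    by_contra hcon
    push_neg at hcon
    have h0 : (n + M - m) % M = 0 := by omega
    obtain ⟨d, hd⟩ := Nat.dvd_of_mod_eq_zero h0
    match d with
    | 0 => omega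
    | 1 => omega
    | (d+2) =>
      have := Nat.mul_le_mul_left M (show 2 ≤ d+2 by omega)
      omega
  · intro j hj
    rw [Finset.mem_Ico] at hj
    rw [Finset.mem_erase, Finset.mem_range]
    refine ⟨?_, Nat.mod_lt _ hM⟩
    intro heq
    have hq := Nat.div_add_mod (m+j) M
    rw [heq] at hq
    have hj' : j = M * ((m+j)/M) := by omega
    match hdm : (m+j)/M with
    | 0 => rw [hdm] at hj'; omega
    | (q+1) =>
      rw [hdm] at hj'
      simp only [Nat.succ_eq_add_one] at hj'
      have := Nat.mul_le_mul_left M (show 1 ≤ q+1 by omega)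
      omega
  · intro j hj
    rw [Finset.mem_Ico] at hj
    rw [show (m + j) % M + M - m = (m + j) % M + (M - m) by omega,
      Nat.mod_add_mod, show m + j + (M - m) = j + M by omega, Nat.add_mod_right]
    exact Nat.mod_eq_of_lt hj.2
  · intro n hn
    rw [left_inv n hn]

end VAux

set_option maxHeartbeats 4000000 in
/-- The polygonal configuration with `Γ₁ = -Γ/((N-1)cos α)` satisfies the relative
equilibrium equations with the stated multipliers `λ₁`, `λ_c` and generator `ξ_e`. -/
theorem polygonal_relative_equilibrium (R : ℝ) (hR : 0 < R) (N : ℕ) (hN : 3 ≤ N)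
    (α : ℝ) (hα : α ∈ Set.Ioo 0 π) (Γ Γ₁ : ℝ)
    (hcos : Real.cos α ≠ 0) (hΓ₁ : Γ₁ = -Γ / (((N : ℝ) - 1) * Real.cos α))
    (x : ℕ → Fin 3 → ℝ)
    (hx : ∀ k, x k = ![R * Real.sin α * Real.cos (2 * π * k / ((N : ℝ) - 1)),
                       R * Real.sin α * Real.sin (2 * π * k / ((N : ℝ) - 1)),
                       R * Real.cos α])
    (xc : Fin 3 → ℝ) (hxc : xc = ![0, 0, R])
    (lam₁ lamc : ℝ) (ξe : Fin 3 → ℝ)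
    (hlam₁ : lam₁ = -(Γ / (R ^ 2 * Real.cos α * (Real.sin α) ^ 2)) *
        (((N : ℝ) - 2) * ((N : ℝ) - 6) / (12 * ((N : ℝ) - 1))))
    (hlamc : lamc = -(Γ / (R ^ 2 * (Real.sin α) ^ 2)) *
        (Real.cos α + (N : ℝ) / (2 * ((N : ℝ) - 1))))
    (hξe : ξe = ![0, 0, Γ / (4 * π * R ^ 2 * (Real.sin α) ^ 2) *
        (1 / ((N : ℝ) - 1) + Real.cos α)]) :
    (∀ m ∈ Finset.range (N - 1),
        (∑ n ∈ (Finset.range (N - 1)).erase m, (Γ₁ / chordSq R (x n) (x m)) • x n)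
          + (Γ / chordSq R xc (x m)) • xc
        = lam₁ • x m + (2 * π * R) • ξe) ∧
    (∑ k ∈ Finset.range (N - 1), (Γ₁ / chordSq R (x k) xc) • x k)
        = lamc • xc + (2 * π * R) • ξe := by
  obtain ⟨hα0, hαπ⟩ := hα
  have hR0 : R ≠ 0 := ne_of_gt hR
  have hπ : π ≠ 0 := Real.pi_ne_zero
  set M : ℕ := N - 1 with hMdef
  have hM2 : 2 ≤ M := by omega
  have hMpos : 0 < M := by omega
  have hM0 : (M:ℝ) ≠ 0 := Nat.cast_ne_zero.mpr (by omega)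
  have hNM : (N:ℝ) = (M:ℝ) + 1 := by
    have hN' : N = M + 1 := by omega
    rw [hN']
    push_cast
    ring
  have hMR : ((N:ℝ) - 1) = (M:ℝ) := by rw [hNM]; ring
  have hsin : 0 < Real.sin α := Real.sin_pos_of_pos_of_lt_pi hα0 hαπ
  have hsin0 : Real.sin α ≠ 0 := ne_of_gt hsin
  have hpyth0 := Real.sin_sq_add_cos_sq α
  have hcos1 : Real.cos α < 1 := by
    rcases lt_or_eq_of_le (Real.cos_le_one α) with h | h
    · exact h
    · exfalso; apply hsin0; nlinarith
  have h1c : (1:ℝ) - Real.cos α ≠ 0 := ne_of_gt (by linarith)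
  have hpyth : Real.sin α^2 = (1 - Real.cos α)*(1 + Real.cos α) := by nlinarith
  have h1c' : (1:ℝ) + Real.cos α ≠ 0 := by
    intro h
    apply hsin0
    nlinarith
  have hxk : ∀ k : ℕ, x k = ![R*Real.sin α*Real.cos (2*π*(k:ℝ)/(M:ℝ)),
      R*Real.sin α*Real.sin (2*π*(k:ℝ)/(M:ℝ)), R*Real.cos α] := by
    intro k; rw [hx k, hMR]
  have hx0 : ∀ k : ℕ, x k 0 = R*Real.sin α*Real.cos (2*π*(k:ℝ)/(M:ℝ)) := by
    intro k; rw [hxk k]; rfl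
  have hx1 : ∀ k : ℕ, x k 1 = R*Real.sin α*Real.sin (2*π*(k:ℝ)/(M:ℝ)) := by
    intro k; rw [hxk k]; rfl
  have hx2 : ∀ k : ℕ, x k 2 = R*Real.cos α := by
    intro k; rw [hxk k]; rfl
  have hxc0 : xc 0 = 0 := by rw [hxc]; rfl
  have hxc1 : xc 1 = 0 := by rw [hxc]; rfl
  have hxc2 : xc 2 = R := by rw [hxc]; rfl
  have hξ0 : ξe 0 = 0 := by rw [hξe]; rfl
  have hξ1 : ξe 1 = 0 := by rw [hξe]; rfl
  have hξ2 : ξe 2 = Γ / (4*π*R^2*Real.sin α^2) * (1/(M:ℝ) + Real.cos α) := by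
    rw [hξe, hMR]; rfl
  have hΓ₁' : Γ₁ = -Γ/((M:ℝ)*Real.cos α) := by rw [hΓ₁, hMR]
  have hlam₁' : lam₁ = -(Γ/(R^2*Real.cos α*Real.sin α^2))
      * (((M:ℝ)-1)*((M:ℝ)-5)/(12*(M:ℝ))) := by
    rw [hlam₁, hNM]; ring
  have hlamc' : lamc = -(Γ/(R^2*Real.sin α^2))
      * (Real.cos α + ((M:ℝ)+1)/(2*(M:ℝ))) := by
    rw [hlamc, hNM]; ring
  have hdotc : ∀ k : ℕ, dot3 xc (x k) = R^2*Real.cos α := by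
    intro k
    rw [dot3, hx0 k, hx1 k, hx2 k, hxc0, hxc1, hxc2]; ring
  have hchordc : ∀ k : ℕ, chordSq R xc (x k) = 2*R^2*(1-Real.cos α) := by
    intro k; rw [chordSq, hdotc k]; ring
  have hdotc2 : ∀ k : ℕ, dot3 (x k) xc = R^2*Real.cos α := by
    intro k; rw [dot3, hx0 k, hx1 k, hx2 k, hxc0, hxc1, hxc2]; ring
  have hchordc2 : ∀ k : ℕ, chordSq R (x k) xc = 2*R^2*(1-Real.cos α) := by
    intro k; rw [chordSq, hdotc2 k]; ring
  have hchordo : ∀ n k : ℕ, chordSq R (x n) (x k)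
      = 2*R^2*Real.sin α^2*(1 - (Real.cos (2*π*(n:ℝ)/(M:ℝ))*Real.cos (2*π*(k:ℝ)/(M:ℝ))
        + Real.sin (2*π*(n:ℝ)/(M:ℝ))*Real.sin (2*π*(k:ℝ)/(M:ℝ)))) := by
    intro n k
    rw [chordSq, dot3, hx0 n, hx1 n, hx2 n, hx0 k, hx1 k, hx2 k]
    linear_combination (-2*R^2) * hpyth0
  have hang : ∀ m j : ℕ, Real.cos (2*π*(((m+j)%M : ℕ):ℝ)/(M:ℝ))
      = Real.cos (2*π*(m:ℝ)/(M:ℝ))*Real.cos (2*π*(j:ℝ)/(M:ℝ))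
        - Real.sin (2*π*(m:ℝ)/(M:ℝ))*Real.sin (2*π*(j:ℝ)/(M:ℝ)) := by
    intro m j
    rw [VAux.cos_mod M (m+j) (by omega)]
    rw [show 2*π*((m+j : ℕ):ℝ)/(M:ℝ) = 2*π*(m:ℝ)/(M:ℝ) + 2*π*(j:ℝ)/(M:ℝ) by
      push_cast; ring]
    exact Real.cos_add _ _
  have hangs : ∀ m j : ℕ, Real.sin (2*π*(((m+j)%M : ℕ):ℝ)/(M:ℝ))
      = Real.sin (2*π*(m:ℝ)/(M:ℝ))*Real.cos (2*π*(j:ℝ)/(M:ℝ))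
        + Real.cos (2*π*(m:ℝ)/(M:ℝ))*Real.sin (2*π*(j:ℝ)/(M:ℝ)) := by
    intro m j
    rw [VAux.sin_mod M (m+j) (by omega)]
    rw [show 2*π*((m+j : ℕ):ℝ)/(M:ℝ) = 2*π*(m:ℝ)/(M:ℝ) + 2*π*(j:ℝ)/(M:ℝ) by
      push_cast; ring]
    exact Real.sin_add _ _
  have hch : ∀ m j : ℕ, chordSq R (x ((m+j)%M)) (x m)
      = 2*R^2*Real.sin α^2*(1 - Real.cos (2*π*(j:ℝ)/(M:ℝ))) := by
    intro m j
    rw [hchordo ((m+j)%M) m, hang m j, hangs m j]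
    have hpm := Real.sin_sq_add_cos_sq (2*π*(m:ℝ)/(M:ℝ))
    linear_combination (-2*R^2*Real.sin α^2*Real.cos (2*π*(j:ℝ)/(M:ℝ))) * hpm
  have houter0 : ∀ m : ℕ, m < M →
      ∑ n ∈ (Finset.range M).erase m, Γ₁ / chordSq R (x n) (x m) * x n 0
      = Γ₁/(2*R*Real.sin α) * (((M:ℝ)-1)*((M:ℝ)-5)/6) * Real.cos (2*π*(m:ℝ)/(M:ℝ)) := by
    intro m hm
    rw [VAux.reindex M m hMpos hm (fun n => Γ₁ / chordSq R (x n) (x m) * x n 0)]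
    have step : ∀ j ∈ Finset.Ico 1 M,
        Γ₁ / chordSq R (x ((m+j)%M)) (x m) * x ((m+j)%M) 0
        = (Γ₁/(2*R*Real.sin α) * Real.cos (2*π*(m:ℝ)/(M:ℝ)))
            * (Real.cos (2*π*(j:ℝ)/(M:ℝ))/(1 - Real.cos (2*π*(j:ℝ)/(M:ℝ))))
          - (Γ₁/(2*R*Real.sin α) * Real.sin (2*π*(m:ℝ)/(M:ℝ)))
            * (Real.sin (2*π*(j:ℝ)/(M:ℝ))/(1 - Real.cos (2*π*(j:ℝ)/(M:ℝ)))) := by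
      intro j hj
      rw [Finset.mem_Ico] at hj
      have hclt := VAux.cos_lt_one M j hM2 hj.1 hj.2
      have hne : 1 - Real.cos (2*π*(j:ℝ)/(M:ℝ)) ≠ 0 := ne_of_gt (by linarith)
      rw [hch m j, hx0 ((m+j)%M), hang m j]
      field_simp
    rw [Finset.sum_congr rfl step, Finset.sum_sub_distrib, ← Finset.mul_sum, ← Finset.mul_sum,
      VAux.SII M hM2, VAux.SIII M hM2]
    ring
  have houter1 : ∀ m : ℕ, m < M →
      ∑ n ∈ (Finset.range M).erase m, Γ₁ / chordSq R (x n) (x m) * x n 1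
      = Γ₁/(2*R*Real.sin α) * (((M:ℝ)-1)*((M:ℝ)-5)/6) * Real.sin (2*π*(m:ℝ)/(M:ℝ)) := by
    intro m hm
    rw [VAux.reindex M m hMpos hm (fun n => Γ₁ / chordSq R (x n) (x m) * x n 1)]
    have step : ∀ j ∈ Finset.Ico 1 M,
        Γ₁ / chordSq R (x ((m+j)%M)) (x m) * x ((m+j)%M) 1
        = (Γ₁/(2*R*Real.sin α) * Real.sin (2*π*(m:ℝ)/(M:ℝ)))
            * (Real.cos (2*π*(j:ℝ)/(M:ℝ))/(1 - Real.cos (2*π*(j:ℝ)/(M:ℝ))))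
          + (Γ₁/(2*R*Real.sin α) * Real.cos (2*π*(m:ℝ)/(M:ℝ)))
            * (Real.sin (2*π*(j:ℝ)/(M:ℝ))/(1 - Real.cos (2*π*(j:ℝ)/(M:ℝ)))) := by
      intro j hj
      rw [Finset.mem_Ico] at hj
      have hclt := VAux.cos_lt_one M j hM2 hj.1 hj.2
      have hne : 1 - Real.cos (2*π*(j:ℝ)/(M:ℝ)) ≠ 0 := ne_of_gt (by linarith)
      rw [hch m j, hx1 ((m+j)%M), hangs m j]
      field_simp
    rw [Finset.sum_congr rfl step, Finset.sum_add_distrib, ← Finset.mul_sum, ← Finset.mul_sum,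
      VAux.SII M hM2, VAux.SIII M hM2]
    ring
  have houter2 : ∀ m : ℕ, m < M →
      ∑ n ∈ (Finset.range M).erase m, Γ₁ / chordSq R (x n) (x m) * x n 2
      = Γ₁*Real.cos α/(2*R*Real.sin α^2) * (((M:ℝ)^2-1)/6) := by
    intro m hm
    rw [VAux.reindex M m hMpos hm (fun n => Γ₁ / chordSq R (x n) (x m) * x n 2)]
    have step : ∀ j ∈ Finset.Ico 1 M,
        Γ₁ / chordSq R (x ((m+j)%M)) (x m) * x ((m+j)%M) 2
        = (Γ₁*Real.cos α/(2*R*Real.sin α^2))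
            * (1/(1 - Real.cos (2*π*(j:ℝ)/(M:ℝ)))) := by
      intro j hj
      rw [Finset.mem_Ico] at hj
      have hclt := VAux.cos_lt_one M j hM2 hj.1 hj.2
      have hne : 1 - Real.cos (2*π*(j:ℝ)/(M:ℝ)) ≠ 0 := ne_of_gt (by linarith)
      rw [hch m j, hx2 ((m+j)%M)]
      field_simp
    rw [Finset.sum_congr rfl step, ← Finset.mul_sum, VAux.SI M hM2]
  have hcent0 : ∑ k ∈ Finset.range M, Γ₁ / chordSq R (x k) xc * x k 0 = 0 := by
    have step : ∀ k ∈ Finset.range M, Γ₁ / chordSq R (x k) xc * x k 0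
        = (Γ₁*R*Real.sin α/(2*R^2*(1-Real.cos α))) * Real.cos (2*π*(k:ℝ)/(M:ℝ)) := by
      intro k _
      rw [hchordc2 k, hx0 k]; ring
    rw [Finset.sum_congr rfl step, ← Finset.mul_sum, (VAux.SCS M hM2).1, mul_zero]
  have hcent1 : ∑ k ∈ Finset.range M, Γ₁ / chordSq R (x k) xc * x k 1 = 0 := by
    have step : ∀ k ∈ Finset.range M, Γ₁ / chordSq R (x k) xc * x k 1
        = (Γ₁*R*Real.sin α/(2*R^2*(1-Real.cos α))) * Real.sin (2*π*(k:ℝ)/(M:ℝ)) := by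
      intro k _
      rw [hchordc2 k, hx1 k]; ring
    rw [Finset.sum_congr rfl step, ← Finset.mul_sum, (VAux.SCS M hM2).2, mul_zero]
  have hcent2 : ∑ k ∈ Finset.range M, Γ₁ / chordSq R (x k) xc * x k 2
      = (M:ℝ) * (Γ₁/(2*R^2*(1-Real.cos α)) * (R*Real.cos α)) := by
    have step : ∀ k ∈ Finset.range M, Γ₁ / chordSq R (x k) xc * x k 2
        = Γ₁/(2*R^2*(1-Real.cos α)) * (R*Real.cos α) := by
      intro k _
      rw [hchordc2 k, hx2 k]
    rw [Finset.sum_congr rfl step]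
    try rw [Finset.sum_const]
    try rw [Finset.card_range]
    try rw [nsmul_eq_mul]
  constructor
  · intro m hm
    have hmM : m < M := Finset.mem_range.mp hm
    funext i
    simp only [Pi.add_apply, Pi.smul_apply, smul_eq_mul, Finset.sum_apply]
    fin_cases i <;> simp only [Fin.zero_eta, Fin.mk_one, Fin.reduceFinMk, Fin.isValue]
    · rw [houter0 m hmM, hchordc m, hxc0, hx0 m, hξ0, hΓ₁', hlam₁']
      field_simp
      ring
    · rw [houter1 m hmM, hchordc m, hxc1, hx1 m, hξ1, hΓ₁', hlam₁']
      field_simp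
      ring
    · rw [houter2 m hmM, hchordc m, hxc2, hx2 m, hξ2, hΓ₁', hlam₁', hpyth]
      field_simp
      ring
  · funext i
    simp only [Pi.add_apply, Pi.smul_apply, smul_eq_mul, Finset.sum_apply]
    fin_cases i <;> simp only [Fin.zero_eta, Fin.mk_one, Fin.reduceFinMk, Fin.isValue]
    · rw [hcent0, hxc0, hξ0]; ring
    · rw [hcent1, hxc1, hξ1]; ring
    · rw [hcent2, hxc2, hξ2, hΓ₁', hlamc', hpyth]
      field_simp
      ring
end

section
/- For N = 2 vortices on the sphere of radius R with strengths Γ₁, Γ₂, let x₁⁰, x₂⁰ be distinct points on the sphere, let l² = 2(R² − x₁⁰·x₂⁰), and set Ω = (Γ₁ x₁⁰ + Γ₂ x₂⁰)/(2πR l²) ∈ ℝ³. Then x_n(t) = exp(t Ω̂) x_n⁰, n = 1,2, where Ω̂ is the linear map v ↦ Ω × v (so exp(t Ω̂) is rotation about the axis Ω with angular speed |Ω|), is a solution of the spherical point vortex equations; moreover, along this solution both x₁(t)·x₂(t) and Γ₁ x₁(t) + Γ₂ x₂(t) are constant in t. -/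
open Real Finset

/-- Cross product on `ℝ³`. -/
def cross3 (u v : Fin 3 → ℝ) : Fin 3 → ℝ :=
  ![u 1 * v 2 - u 2 * v 1, u 2 * v 0 - u 0 * v 2, u 0 * v 1 - u 1 * v 0]

/-- The matrix of the linear map `v ↦ Ω × v` ("hat map"). -/
def hatMap (Ω : Fin 3 → ℝ) : Matrix (Fin 3) (Fin 3) ℝ :=
  !![0, -Ω 2, Ω 1; Ω 2, 0, -Ω 0; -Ω 1, Ω 0, 0]

/-- `M ↦ M.mulVec x` as a linear map. -/
noncomputable def mulVecL (x : Fin 3 → ℝ) : Matrix (Fin 3) (Fin 3) ℝ →ₗ[ℝ] (Fin 3 → ℝ) where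
  toFun M := M.mulVec x
  map_add' M N := Matrix.add_mulVec M N x
  map_smul' c M := Matrix.smul_mulVec c M x

lemma exp_mulVec_hasDerivAt (A : Matrix (Fin 3) (Fin 3) ℝ) (x : Fin 3 → ℝ) (t : ℝ) :
    HasDerivAt (fun t : ℝ => (NormedSpace.exp (t • A)).mulVec x)
      (A.mulVec ((NormedSpace.exp (t • A)).mulVec x)) t := by
  letI : SeminormedRing (Matrix (Fin 3) (Fin 3) ℝ) := Matrix.linftyOpSemiNormedRing
  letI : NormedRing (Matrix (Fin 3) (Fin 3) ℝ) := Matrix.linftyOpNormedRing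
  letI : NormedAlgebra ℝ (Matrix (Fin 3) (Fin 3) ℝ) := Matrix.linftyOpNormedAlgebra
  have h1 : HasDerivAt (fun u : ℝ => NormedSpace.exp (u • A))
      (A * NormedSpace.exp (t • A)) t := hasDerivAt_exp_smul_const' A t
  have h2 := ((mulVecL x).toContinuousLinearMap.hasFDerivAt).comp_hasDerivAt t h1
  rw [Matrix.mulVec_mulVec]
  exact h2

lemma exp_zero_mulVec (A : Matrix (Fin 3) (Fin 3) ℝ) (x : Fin 3 → ℝ) :
    (NormedSpace.exp ((0:ℝ) • A)).mulVec x = x := by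
  rw [zero_smul, NormedSpace.exp_zero, Matrix.one_mulVec]

lemma cross3_c0 (u v : Fin 3 → ℝ) : cross3 u v 0 = u 1 * v 2 - u 2 * v 1 := rfl
lemma cross3_c1 (u v : Fin 3 → ℝ) : cross3 u v 1 = u 2 * v 0 - u 0 * v 2 := rfl
lemma cross3_c2 (u v : Fin 3 → ℝ) : cross3 u v 2 = u 0 * v 1 - u 1 * v 0 := rfl

set_option maxHeartbeats 1000000 in
/-- Two point vortices on the sphere evolve as the one-parameter rotation group generated by
`Ω = (Γ₁x₁⁰ + Γ₂x₂⁰)/(2πRl²)`; along this solution the dot product `x₁·x₂` and the momentum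
`Γ₁x₁ + Γ₂x₂` are constant. -/
theorem two_vortex_sphere_solution (R : ℝ) (hR : 0 < R) (Γ₁ Γ₂ : ℝ)
    (x₁ x₂ : Fin 3 → ℝ) (h₁ : dot3 x₁ x₁ = R ^ 2) (h₂ : dot3 x₂ x₂ = R ^ 2)
    (hne : x₁ ≠ x₂)
    (l2 : ℝ) (hl2 : l2 = chordSq R x₁ x₂)
    (Ω : Fin 3 → ℝ) (hΩ : Ω = (2 * π * R * l2)⁻¹ • (Γ₁ • x₁ + Γ₂ • x₂))
    (X₁ X₂ : ℝ → Fin 3 → ℝ)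
    (hX₁ : ∀ t, X₁ t = (NormedSpace.exp (t • hatMap Ω)).mulVec x₁)
    (hX₂ : ∀ t, X₂ t = (NormedSpace.exp (t • hatMap Ω)).mulVec x₂)
    -- the hat map realizes `v ↦ Ω × v`:
    (hhat : ∀ v : Fin 3 → ℝ, (hatMap Ω).mulVec v = cross3 Ω v) :
    (∀ t : ℝ,
        HasDerivAt X₁
          ((2 * π * R)⁻¹ • ((Γ₂ / chordSq R (X₂ t) (X₁ t)) • cross3 (X₂ t) (X₁ t))) t ∧
        HasDerivAt X₂
          ((2 * π * R)⁻¹ • ((Γ₁ / chordSq R (X₁ t) (X₂ t))) • cross3 (X₁ t) (X₂ t)) t) ∧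
    (∀ t : ℝ, dot3 (X₁ t) (X₂ t) = dot3 x₁ x₂) ∧
    (∀ t : ℝ, Γ₁ • X₁ t + Γ₂ • X₂ t = Γ₁ • x₁ + Γ₂ • x₂) := by
  have hfun₁ : X₁ = fun t => (NormedSpace.exp (t • hatMap Ω)).mulVec x₁ := funext hX₁
  have hfun₂ : X₂ = fun t => (NormedSpace.exp (t • hatMap Ω)).mulVec x₂ := funext hX₂
  have hD₁ : ∀ t, HasDerivAt X₁ (cross3 Ω (X₁ t)) t := by
    intro t
    have h := exp_mulVec_hasDerivAt (hatMap Ω) x₁ t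
    rw [hhat, ← hX₁ t] at h
    exact h.congr_of_eventuallyEq (Filter.Eventually.of_forall fun u => hX₁ u)
  have hD₂ : ∀ t, HasDerivAt X₂ (cross3 Ω (X₂ t)) t := by
    intro t
    have h := exp_mulVec_hasDerivAt (hatMap Ω) x₂ t
    rw [hhat, ← hX₂ t] at h
    exact h.congr_of_eventuallyEq (Filter.Eventually.of_forall fun u => hX₂ u)
  have c₁ : ∀ (t : ℝ) (i : Fin 3), HasDerivAt (fun s => X₁ s i) (cross3 Ω (X₁ t) i) t :=
    fun t i => hasDerivAt_pi.mp (hD₁ t) i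
  have c₂ : ∀ (t : ℝ) (i : Fin 3), HasDerivAt (fun s => X₂ s i) (cross3 Ω (X₂ t) i) t :=
    fun t i => hasDerivAt_pi.mp (hD₂ t) i
  have hX₁0 : X₁ 0 = x₁ := by rw [hX₁ 0, exp_zero_mulVec]
  have hX₂0 : X₂ 0 = x₂ := by rw [hX₂ 0, exp_zero_mulVec]
  -- dot product invariant
  have hdot : ∀ t : ℝ, dot3 (X₁ t) (X₂ t) = dot3 x₁ x₂ := by
    have hd : ∀ s : ℝ, HasDerivAt (fun u => dot3 (X₁ u) (X₂ u)) 0 s := by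
      intro s
      have h := (((c₁ s 0).mul (c₂ s 0)).add ((c₁ s 1).mul (c₂ s 1))).add
        ((c₁ s 2).mul (c₂ s 2))
      refine h.congr_deriv ?_
      simp only [cross3_c0, cross3_c1, cross3_c2]
      ring
    intro t
    have := is_const_of_deriv_eq_zero (f := fun u => dot3 (X₁ u) (X₂ u))
      (fun s => (hd s).differentiableAt) (fun s => (hd s).deriv) t 0
    rw [this, hX₁0, hX₂0]
  -- momentum invariant
  have hΩi : ∀ i, Ω i = (2 * π * R * l2)⁻¹ * (Γ₁ * x₁ i + Γ₂ * x₂ i) := by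
    intro i; rw [hΩ]; simp [Pi.smul_apply, Pi.add_apply, smul_eq_mul]
  have hmomi : ∀ (t : ℝ) (i : Fin 3), Γ₁ * X₁ t i + Γ₂ * X₂ t i = Γ₁ * x₁ i + Γ₂ * x₂ i := by
    have hq : ∀ s : ℝ, HasDerivAt (fun u =>
        (Γ₁ * X₁ u 0 + Γ₂ * X₂ u 0 - (Γ₁ * x₁ 0 + Γ₂ * x₂ 0)) ^ 2 +
        (Γ₁ * X₁ u 1 + Γ₂ * X₂ u 1 - (Γ₁ * x₁ 1 + Γ₂ * x₂ 1)) ^ 2 +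
        (Γ₁ * X₁ u 2 + Γ₂ * X₂ u 2 - (Γ₁ * x₁ 2 + Γ₂ * x₂ 2)) ^ 2) 0 s := by
      intro s
      have d0 : HasDerivAt (fun u => Γ₁ * X₁ u 0 + Γ₂ * X₂ u 0 - (Γ₁ * x₁ 0 + Γ₂ * x₂ 0))
          (Γ₁ * cross3 Ω (X₁ s) 0 + Γ₂ * cross3 Ω (X₂ s) 0) s :=
        (((c₁ s 0).const_mul Γ₁).add ((c₂ s 0).const_mul Γ₂)).sub_const _
      have d1 : HasDerivAt (fun u => Γ₁ * X₁ u 1 + Γ₂ * X₂ u 1 - (Γ₁ * x₁ 1 + Γ₂ * x₂ 1))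
          (Γ₁ * cross3 Ω (X₁ s) 1 + Γ₂ * cross3 Ω (X₂ s) 1) s :=
        (((c₁ s 1).const_mul Γ₁).add ((c₂ s 1).const_mul Γ₂)).sub_const _
      have d2 : HasDerivAt (fun u => Γ₁ * X₁ u 2 + Γ₂ * X₂ u 2 - (Γ₁ * x₁ 2 + Γ₂ * x₂ 2))
          (Γ₁ * cross3 Ω (X₁ s) 2 + Γ₂ * cross3 Ω (X₂ s) 2) s :=
        (((c₁ s 2).const_mul Γ₁).add ((c₂ s 2).const_mul Γ₂)).sub_const _
      have h := ((d0.pow 2).add (d1.pow 2)).add (d2.pow 2)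
      refine h.congr_deriv ?_
      simp only [cross3_c0, cross3_c1, cross3_c2, hΩi]
      ring
    have hqconst : ∀ t : ℝ,
        (Γ₁ * X₁ t 0 + Γ₂ * X₂ t 0 - (Γ₁ * x₁ 0 + Γ₂ * x₂ 0)) ^ 2 +
        (Γ₁ * X₁ t 1 + Γ₂ * X₂ t 1 - (Γ₁ * x₁ 1 + Γ₂ * x₂ 1)) ^ 2 +
        (Γ₁ * X₁ t 2 + Γ₂ * X₂ t 2 - (Γ₁ * x₁ 2 + Γ₂ * x₂ 2)) ^ 2 = 0 := by
      intro t
      have h0 := is_const_of_deriv_eq_zero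
        (f := fun u =>
          (Γ₁ * X₁ u 0 + Γ₂ * X₂ u 0 - (Γ₁ * x₁ 0 + Γ₂ * x₂ 0)) ^ 2 +
          (Γ₁ * X₁ u 1 + Γ₂ * X₂ u 1 - (Γ₁ * x₁ 1 + Γ₂ * x₂ 1)) ^ 2 +
          (Γ₁ * X₁ u 2 + Γ₂ * X₂ u 2 - (Γ₁ * x₁ 2 + Γ₂ * x₂ 2)) ^ 2)
        (fun s => (hq s).differentiableAt) (fun s => (hq s).deriv) t 0
      rw [h0, hX₁0, hX₂0]; ring
    intro t i
    have h := hqconst t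
    have s0 := sq_nonneg (Γ₁ * X₁ t 0 + Γ₂ * X₂ t 0 - (Γ₁ * x₁ 0 + Γ₂ * x₂ 0))
    have s1 := sq_nonneg (Γ₁ * X₁ t 1 + Γ₂ * X₂ t 1 - (Γ₁ * x₁ 1 + Γ₂ * x₂ 1))
    have s2 := sq_nonneg (Γ₁ * X₁ t 2 + Γ₂ * X₂ t 2 - (Γ₁ * x₁ 2 + Γ₂ * x₂ 2))
    have z0 : (Γ₁ * X₁ t 0 + Γ₂ * X₂ t 0 - (Γ₁ * x₁ 0 + Γ₂ * x₂ 0)) ^ 2 = 0 := by linarith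
    have z1 : (Γ₁ * X₁ t 1 + Γ₂ * X₂ t 1 - (Γ₁ * x₁ 1 + Γ₂ * x₂ 1)) ^ 2 = 0 := by linarith
    have z2 : (Γ₁ * X₁ t 2 + Γ₂ * X₂ t 2 - (Γ₁ * x₁ 2 + Γ₂ * x₂ 2)) ^ 2 = 0 := by linarith
    have e0 : Γ₁ * X₁ t 0 + Γ₂ * X₂ t 0 = Γ₁ * x₁ 0 + Γ₂ * x₂ 0 :=
      sub_eq_zero.mp ((pow_eq_zero_iff two_ne_zero).mp z0)
    have e1 : Γ₁ * X₁ t 1 + Γ₂ * X₂ t 1 = Γ₁ * x₁ 1 + Γ₂ * x₂ 1 :=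
      sub_eq_zero.mp ((pow_eq_zero_iff two_ne_zero).mp z1)
    have e2 : Γ₁ * X₁ t 2 + Γ₂ * X₂ t 2 = Γ₁ * x₁ 2 + Γ₂ * x₂ 2 :=
      sub_eq_zero.mp ((pow_eq_zero_iff two_ne_zero).mp z2)
    fin_cases i
    · exact e0
    · exact e1
    · exact e2
  have hmom : ∀ t : ℝ, Γ₁ • X₁ t + Γ₂ • X₂ t = Γ₁ • x₁ + Γ₂ • x₂ := by
    intro t; funext i
    simpa [Pi.add_apply, Pi.smul_apply, smul_eq_mul] using hmomi t i
  refine ⟨fun t => ?_, hdot, hmom⟩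
  -- Ω in terms of the evolved momentum
  have hΩt : ∀ i, Ω i = (2 * π * R)⁻¹ * l2⁻¹ * (Γ₁ * X₁ t i + Γ₂ * X₂ t i) := by
    intro i; rw [hΩi i, ← hmomi t i, mul_inv]
  have hc12 : dot3 (X₁ t) (X₂ t) = dot3 x₁ x₂ := hdot t
  have hc21 : dot3 (X₂ t) (X₁ t) = dot3 x₁ x₂ := by
    rw [← hc12]; simp only [dot3]; ring
  have hch21 : chordSq R (X₂ t) (X₁ t) = l2 := by
    rw [hl2]; simp only [chordSq, hc21]
  have hch12 : chordSq R (X₁ t) (X₂ t) = l2 := by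
    rw [hl2]; simp only [chordSq, hc12]
  constructor
  · convert hD₁ t using 1
    have g0 : ((2 * π * R)⁻¹ • ((Γ₂ / chordSq R (X₂ t) (X₁ t)) • cross3 (X₂ t) (X₁ t))) 0 =
        cross3 Ω (X₁ t) 0 := by
      rw [hch21]
      simp only [Pi.smul_apply, smul_eq_mul, cross3_c0, cross3_c1, cross3_c2, hΩt,
        div_eq_mul_inv]
      ring
    have g1 : ((2 * π * R)⁻¹ • ((Γ₂ / chordSq R (X₂ t) (X₁ t)) • cross3 (X₂ t) (X₁ t))) 1 =
        cross3 Ω (X₁ t) 1 := by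
      rw [hch21]
      simp only [Pi.smul_apply, smul_eq_mul, cross3_c0, cross3_c1, cross3_c2, hΩt,
        div_eq_mul_inv]
      ring
    have g2 : ((2 * π * R)⁻¹ • ((Γ₂ / chordSq R (X₂ t) (X₁ t)) • cross3 (X₂ t) (X₁ t))) 2 =
        cross3 Ω (X₁ t) 2 := by
      rw [hch21]
      simp only [Pi.smul_apply, smul_eq_mul, cross3_c0, cross3_c1, cross3_c2, hΩt,
        div_eq_mul_inv]
      ring
    funext i
    fin_cases i
    · exact g0
    · exact g1
    · exact g2
  · convert hD₂ t using 1
    have g0 : ((2 * π * R)⁻¹ • ((Γ₁ / chordSq R (X₁ t) (X₂ t)) • cross3 (X₁ t) (X₂ t))) 0 =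
        cross3 Ω (X₂ t) 0 := by
      rw [hch12]
      simp only [Pi.smul_apply, smul_eq_mul, cross3_c0, cross3_c1, cross3_c2, hΩt,
        div_eq_mul_inv]
      ring
    have g1 : ((2 * π * R)⁻¹ • ((Γ₁ / chordSq R (X₁ t) (X₂ t)) • cross3 (X₁ t) (X₂ t))) 1 =
        cross3 Ω (X₂ t) 1 := by
      rw [hch12]
      simp only [Pi.smul_apply, smul_eq_mul, cross3_c0, cross3_c1, cross3_c2, hΩt,
        div_eq_mul_inv]
      ring
    have g2 : ((2 * π * R)⁻¹ • ((Γ₁ / chordSq R (X₁ t) (X₂ t)) • cross3 (X₁ t) (X₂ t))) 2 =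
        cross3 Ω (X₂ t) 2 := by
      rw [hch12]
      simp only [Pi.smul_apply, smul_eq_mul, cross3_c0, cross3_c1, cross3_c2, hΩt,
        div_eq_mul_inv]
      ring
    funext i
    fin_cases i
    · exact g0
    · exact g1
    · exact g2
end
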